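/- arXiv:1702.01275 — 5 statements merged into one kernel-verified Lean document; each statement's English description precedes it below -/
import Mathlib

section
/- If G = (S,E) is a maximal biplane graph on a finite point set S in general position, then there exist two triangulations (maximal plane graphs) T' = (S,E') and T'' = (S,E'') of S such that E = E' ∪ E''. -/
/-- Points in the plane. -/
abbrev Pt := ℝ × ℝ

/-- `S` is in general position: no three distinct points of `S` are collinear. -/
def GenPos (S : Finset Pt) : Prop :=
  ∀ p ∈ S, ∀ q ∈ S, ∀ r ∈ S, p ≠ q → p ≠ r → q ≠ r →
    ¬ Collinear ℝ ({p, q, r} : Set Pt)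

/-- The relatively open segment corresponding to an unordered pair of points. -/
def segOf (e : Sym2 Pt) : Set Pt :=
  Sym2.lift ⟨fun a b => openSegment ℝ a b, fun a b => openSegment_symm ℝ a b⟩ e

/-- `E` is a set of edges on the vertex set `S`: every edge is an unordered pair of
two distinct points of `S`. -/
def IsEdgeSet (S : Finset Pt) (E : Finset (Sym2 Pt)) : Prop :=
  ∀ e ∈ E, ¬ e.IsDiag ∧ ∀ p ∈ e, p ∈ S

/-- A set of edges forms a plane graph: no two distinct edges cross, i.e. their
relatively open segments are disjoint. -/
def PlaneEdges (E : Finset (Sym2 Pt)) : Prop :=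
  ∀ e ∈ E, ∀ f ∈ E, e ≠ f → segOf e ∩ segOf f = ∅

/-- A set of edges forms a biplane graph: it can be partitioned into two plane layers. -/
def BiplaneEdges (E : Finset (Sym2 Pt)) : Prop :=
  ∃ E₁ E₂ : Finset (Sym2 Pt), E = E₁ ∪ E₂ ∧ Disjoint E₁ E₂ ∧
    PlaneEdges E₁ ∧ PlaneEdges E₂

/-- `(S, E)` is a maximal plane graph (triangulation) on `S`. -/
def MaxPlane (S : Finset Pt) (E : Finset (Sym2 Pt)) : Prop :=
  IsEdgeSet S E ∧ PlaneEdges E ∧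
  ∀ e : Sym2 Pt, ¬ e.IsDiag → (∀ p ∈ e, p ∈ S) → e ∉ E → ¬ PlaneEdges (insert e E)

/-- `(S, E)` is a maximal biplane graph on `S`. -/
def MaxBiplane (S : Finset Pt) (E : Finset (Sym2 Pt)) : Prop :=
  IsEdgeSet S E ∧ BiplaneEdges E ∧
  ∀ e : Sym2 Pt, ¬ e.IsDiag → (∀ p ∈ e, p ∈ S) → e ∉ E → ¬ BiplaneEdges (insert e E)

/-- `p` is a vertex of the convex hull of `S`. -/
def HullVertex (S : Finset Pt) (p : Pt) : Prop :=
  p ∈ S ∧ p ∉ convexHull ℝ ((S : Set Pt) \ {p})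

/-- The number of convex-hull vertices of `S`. -/
noncomputable def hullCard (S : Finset Pt) : ℕ :=
  {p : Pt | HullVertex S p}.ncard

/-- The triangle `a b c` is a face of the plane graph `(S,E)`: the three sides are
edges and the open interior of the triangle contains no point of `S`. -/
def IsFace (S : Finset Pt) (E : Finset (Sym2 Pt)) (a b c : Pt) : Prop :=
  s(a, b) ∈ E ∧ s(a, c) ∈ E ∧ s(b, c) ∈ E ∧
  ∀ p ∈ S, p ∉ interior (convexHull ℝ ({a, b, c} : Set Pt))

/-- The edge `e` is flippable in the triangulation `(S,E)`: its two adjacent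
triangles are faces `a b c` and `a b d`, and the open segments `ab` and `cd` cross
(equivalently, the quadrilateral `a c b d` is convex). -/
def Flippable (S : Finset Pt) (E : Finset (Sym2 Pt)) (e : Sym2 Pt) : Prop :=
  ∃ a b c d : Pt, e = s(a, b) ∧ c ∈ S ∧ d ∈ S ∧
    IsFace S E a b c ∧ IsFace S E a b d ∧
    (openSegment ℝ a b ∩ openSegment ℝ c d).Nonempty

/-- The abstract graph of the geometric graph with edge set `E`, induced on the
vertex set `V`. -/
def absGraph (E : Finset (Sym2 Pt)) (V : Set Pt) : SimpleGraph V where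
  Adj u v := s((u : Pt), (v : Pt)) ∈ E ∧ u ≠ v
  symm := by
    constructor
    intro u v h
    exact ⟨by rw [Sym2.eq_swap]; exact h.1, h.2.symm⟩
  loopless := by
    constructor
    intro u h
    exact h.2 rfl

/-- The geometric graph `(S,E)` is `k`-connected as an abstract graph: it has more
than `k` vertices, and removing any set of fewer than `k` vertices leaves a
connected graph. -/
def KConnected (k : ℕ) (S : Finset Pt) (E : Finset (Sym2 Pt)) : Prop :=
  k < S.card ∧ ∀ C : Finset Pt, C ⊆ S → C.card < k →
    (absGraph E ((S : Set Pt) \ (C : Set Pt))).Connected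

lemma plane_mono {E F : Finset (Sym2 Pt)} (h : E ⊆ F) (hp : PlaneEdges F) :
    PlaneEdges E := fun e he f hf hef => hp e (h he) f (h hf) hef

lemma extend_plane (S : Finset Pt) (E₁ : Finset (Sym2 Pt))
    (h1 : IsEdgeSet S E₁) (hp : PlaneEdges E₁) :
    ∃ F, E₁ ⊆ F ∧ MaxPlane S F := by
  classical
  set Ω : Finset (Sym2 Pt) := S.sym2.filter (fun e => ¬ e.IsDiag) with hΩ
  have hmemΩ : ∀ e : Sym2 Pt, e ∈ Ω ↔ (¬ e.IsDiag ∧ ∀ p ∈ e, p ∈ S) := by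
    intro e
    simp [hΩ, Finset.mem_filter, Finset.mem_sym2_iff, and_comm]
  have hE₁Ω : E₁ ⊆ Ω := fun e he => (hmemΩ e).2 ⟨(h1 e he).1, (h1 e he).2⟩
  set C : Finset (Finset (Sym2 Pt)) :=
    Ω.powerset.filter (fun F => E₁ ⊆ F ∧ PlaneEdges F) with hC
  have hne : C.Nonempty := ⟨E₁, by
    simp only [hC, Finset.mem_filter, Finset.mem_powerset]
    exact ⟨hE₁Ω, Finset.Subset.refl _, hp⟩⟩
  obtain ⟨F, hFC, hFmax⟩ := C.exists_max_image Finset.card hne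
  simp only [hC, Finset.mem_filter, Finset.mem_powerset] at hFC
  obtain ⟨hFΩ, hE₁F, hFp⟩ := hFC
  refine ⟨F, hE₁F, fun e he => (hmemΩ e).1 (hFΩ he), hFp, ?_⟩
  intro e hd hS heF hins
  have hinsC : insert e F ∈ C := by
    simp only [hC, Finset.mem_filter, Finset.mem_powerset]
    refine ⟨Finset.insert_subset ((hmemΩ e).2 ⟨hd, hS⟩) hFΩ,
      hE₁F.trans (Finset.subset_insert _ _), hins⟩
  have := hFmax _ hinsC
  rw [Finset.card_insert_of_notMem heF] at this
  omega

/-- Every maximal biplane graph is the union of two triangulations. -/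
theorem maximal_biplane_union_of_triangulations
    (S : Finset Pt) (E : Finset (Sym2 Pt))
    (hgp : GenPos S) (hmax : MaxBiplane S E) :
    ∃ E' E'' : Finset (Sym2 Pt),
      MaxPlane S E' ∧ MaxPlane S E'' ∧ E = E' ∪ E'' := by
  classical
  obtain ⟨hE, ⟨E₁, E₂, hEeq, hdisj, hp1, hp2⟩, hmaxi⟩ := hmax
  have hsub1 : E₁ ⊆ E := hEeq ▸ Finset.subset_union_left
  have hsub2 : E₂ ⊆ E := hEeq ▸ Finset.subset_union_right
  obtain ⟨E', hE1', hM'⟩ := extend_plane S E₁ (fun e he => hE e (hsub1 he)) hp1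
  obtain ⟨E'', hE2'', hM''⟩ := extend_plane S E₂ (fun e he => hE e (hsub2 he)) hp2
  have key : ∀ (F E₁ E₂ : Finset (Sym2 Pt)), MaxPlane S F → E₁ ⊆ F → E = E₁ ∪ E₂ →
      Disjoint E₁ E₂ → PlaneEdges E₂ → F ⊆ E := by
    intro F E₁ E₂ hM h1F hEeq hdisj hp2
    intro f hf
    by_contra hfE
    refine hmaxi f (hM.1 f hf).1 (hM.1 f hf).2 hfE ?_
    refine ⟨insert f E₁, E₂, ?_, ?_, ?_, hp2⟩
    · rw [hEeq, Finset.insert_union]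
    · rw [Finset.disjoint_insert_left]
      exact ⟨fun h => hfE (hEeq ▸ Finset.mem_union_right _ h), hdisj⟩
    · exact plane_mono (Finset.insert_subset hf h1F) hM.2.1
  have h1 : E' ⊆ E := key E' E₁ E₂ hM' hE1' hEeq hdisj hp2
  have h2 : E'' ⊆ E := key E'' E₂ E₁ hM'' hE2''
    (by rw [hEeq, Finset.union_comm]) hdisj.symm hp1
  refine ⟨E', E'', hM', hM'', le_antisymm ?_ (Finset.union_subset h1 h2)⟩
  rw [hEeq]
  exact Finset.union_subset (hE1'.trans Finset.subset_union_left)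
    (hE2''.trans Finset.subset_union_right)
end

section
/- Let G = (S,E) be a maximal biplane graph on a finite point set S in general position, and suppose E = E' ∪ E'' where T' = (S,E') and T'' = (S,E'') are triangulations of S. Then no edge of E' ∩ E'' is flippable in T', and no edge of E' ∩ E'' is flippable in T''. -/
open AffineMap in
lemma segOf_mk (p q : Pt) : segOf s(p,q) = openSegment ℝ p q := rfl

open AffineMap in
lemma exists_triBasis (a b c : Pt) (h : ¬ Collinear ℝ ({a,b,c} : Set Pt)) :
    ∃ B : AffineBasis (Fin 3) ℝ Pt, B 0 = a ∧ B 1 = b ∧ B 2 = c ∧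
      Set.range ⇑B = ({a,b,c} : Set Pt) := by
  have hind : AffineIndependent ℝ ![a,b,c] := affineIndependent_iff_not_collinear_set.mpr h
  have htop : affineSpan ℝ (Set.range ![a,b,c]) = ⊤ := by
    rw [hind.affineSpan_eq_top_iff_card_eq_finrank_add_one]
    simp
  refine ⟨⟨![a,b,c], hind, htop⟩, rfl, rfl, rfl, ?_⟩
  ext x
  simp only [Set.mem_insert_iff, Set.mem_singleton_iff]
  constructor
  · rintro ⟨i, rfl⟩
    fin_cases i
    · exact Or.inl rfl
    · exact Or.inr (Or.inl rfl)
    · exact Or.inr (Or.inr rfl)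
  · rintro (rfl|rfl|rfl)
    exacts [⟨0, rfl⟩, ⟨1, rfl⟩, ⟨2, rfl⟩]

open AffineMap in
lemma mem_interior_tri (B : AffineBasis (Fin 3) ℝ Pt) {x y : Pt}
    (hx : x ∈ openSegment ℝ (B 0) (B 1)) (hy : y ∈ openSegment ℝ (B 2) x) :
    y ∈ interior (convexHull ℝ (Set.range ⇑B)) := by
  rw [B.interior_convexHull]
  rw [openSegment_eq_image_lineMap] at hx hy
  obtain ⟨t, ht, rfl⟩ := hx
  obtain ⟨s, hs, rfl⟩ := hy
  intro i
  rw [(B.coord i).apply_lineMap, (B.coord i).apply_lineMap]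
  obtain ⟨ht0, ht1⟩ := ht
  obtain ⟨hs0, hs1⟩ := hs
  fin_cases i <;>
    simp only [B.coord_apply, lineMap_apply, vsub_eq_sub, vadd_eq_add, smul_eq_mul] <;>
    norm_num [Fin.ext_iff] <;> nlinarith

open AffineMap in
lemma coord_eq_zero_on_side (B : AffineBasis (Fin 3) ℝ Pt) {i j k : Fin 3}
    (hki : k ≠ i) (hkj : k ≠ j) {y : Pt} (hy : y ∈ openSegment ℝ (B i) (B j)) :
    B.coord k y = 0 := by
  rw [openSegment_eq_image_lineMap] at hy
  obtain ⟨t, ht, rfl⟩ := hy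
  rw [(B.coord k).apply_lineMap, B.coord_apply, B.coord_apply, if_neg hki, if_neg hkj]
  simp

open AffineMap in
lemma frontier_tri (B : AffineBasis (Fin 3) ℝ Pt) {z : Pt}
    (hz : z ∈ convexHull ℝ (Set.range ⇑B))
    (hz2 : z ∉ interior (convexHull ℝ (Set.range ⇑B))) :
    ∃ i j : Fin 3, i ≠ j ∧ z ∈ segment ℝ (B i) (B j) := by
  rw [B.convexHull_eq_nonneg_coord] at hz
  rw [B.interior_convexHull] at hz2
  simp only [Set.mem_setOf_eq] at hz2
  push_neg at hz2
  obtain ⟨k, hk⟩ := hz2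
  have hk0 : B.coord k z = 0 := le_antisymm hk (hz k)
  have hsum : ∑ i, B.coord i z = 1 := B.sum_coord_apply_eq_one z
  have hrep : z = ∑ i, B.coord i z • B i := by
    conv_lhs => rw [← B.affineCombination_coord_eq_self z]
    exact Finset.univ.affineCombination_eq_linear_combination _ _ hsum
  rw [Fin.sum_univ_three] at hsum hrep
  fin_cases k
  · have h0 : B.coord 0 z = 0 := hk0
    rw [h0, zero_smul, zero_add] at hrep
    rw [h0] at hsum
    exact ⟨1, 2, by decide, B.coord 1 z, B.coord 2 z, hz 1, hz 2, by linarith, hrep.symm⟩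
  · have h0 : B.coord 1 z = 0 := hk0
    rw [h0, zero_smul, add_zero] at hrep
    rw [h0] at hsum
    exact ⟨0, 2, by decide, B.coord 0 z, B.coord 2 z, hz 0, hz 2, by linarith, hrep.symm⟩
  · have h0 : B.coord 2 z = 0 := hk0
    rw [h0, zero_smul, add_zero] at hrep
    rw [h0] at hsum
    exact ⟨0, 1, by decide, B.coord 0 z, B.coord 1 z, hz 0, hz 1, by linarith, hrep.symm⟩

open AffineMap in
lemma openSegment_sub {r r' y : Pt} (hy : y ∈ openSegment ℝ r r') :
    openSegment ℝ r y ⊆ openSegment ℝ r r' := by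
  rw [openSegment_eq_image_lineMap] at hy
  obtain ⟨s, hs, rfl⟩ := hy
  rintro w hw
  rw [openSegment_eq_image_lineMap] at hw
  obtain ⟨t, ht, rfl⟩ := hw
  rw [openSegment_eq_image_lineMap]
  refine ⟨t * s, ⟨by nlinarith [hs.1, ht.1], by nlinarith [hs.1, hs.2, ht.1, ht.2]⟩, ?_⟩
  rw [lineMap_apply_module, lineMap_apply_module, lineMap_apply_module]
  module

open AffineMap in
lemma openSegment_facts {r r' z : Pt} (h : z ∈ openSegment ℝ r r') (hne : r ≠ r') :
    Collinear ℝ ({z, r, r'} : Set Pt) ∧ z ≠ r ∧ z ≠ r' := by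
  refine ⟨?_, ?_, ?_⟩
  · rw [openSegment_eq_image_lineMap] at h
    obtain ⟨t, ht, rfl⟩ := h
    exact collinear_insert_of_mem_affineSpan_pair (lineMap_mem_affineSpan_pair ..)
  · rintro rfl; exact hne (left_mem_openSegment_iff.mp h)
  · rintro rfl; exact hne (right_mem_openSegment_iff.mp h)

lemma face_data {S : Finset Pt} {E1 : Finset (Sym2 Pt)} (hedge : IsEdgeSet S E1)
    {a b c : Pt} (h : IsFace S E1 a b c) :
    a ∈ S ∧ b ∈ S ∧ c ∈ S ∧ a ≠ b ∧ a ≠ c ∧ b ≠ c := by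
  obtain ⟨hab, hac, hbc, -⟩ := h
  refine ⟨(hedge _ hab).2 a (by simp), (hedge _ hab).2 b (by simp),
    (hedge _ hac).2 c (by simp), ?_, ?_, ?_⟩
  · rintro rfl; exact (hedge _ hab).1 (by simp)
  · rintro rfl; exact (hedge _ hac).1 (by simp)
  · rintro rfl; exact (hedge _ hbc).1 (by simp)

open AffineMap in
/-- No edge of a plane graph passes through the interior of a face. -/
lemma face_interior_disjoint
    {S : Finset Pt} {E1 : Finset (Sym2 Pt)} (hgp : GenPos S)
    (hedge : IsEdgeSet S E1) (hpl : PlaneEdges E1)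
    {a b c : Pt} (hface : IsFace S E1 a b c)
    {f : Sym2 Pt} (hf : f ∈ E1) :
    segOf f ∩ interior (convexHull ℝ ({a,b,c} : Set Pt)) = ∅ := by
  obtain ⟨haS, hbS, hcS, hne_ab, hne_ac, hne_bc⟩ := face_data hedge hface
  obtain ⟨hab, hac, hbc, hempty⟩ := hface
  have hcol : ¬ Collinear ℝ ({a,b,c} : Set Pt) :=
    hgp a haS b hbS c hcS hne_ab hne_ac hne_bc
  obtain ⟨B, hB0, hB1, hB2, hBr⟩ := exists_triBasis a b c hcol
  set K := convexHull ℝ ({a,b,c} : Set Pt) with hKdef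
  have hKr : K = convexHull ℝ (Set.range ⇑B) := by rw [hBr]
  have hsideE : ∀ i j : Fin 3, i ≠ j → s(B i, B j) ∈ E1 := by
    intro i j hij
    fin_cases i <;> fin_cases j <;>
      first
        | exact absurd rfl hij
        | (show s(B 0, B 1) ∈ E1; rw [hB0, hB1]; exact hab)
        | (show s(B 0, B 2) ∈ E1; rw [hB0, hB2]; exact hac)
        | (show s(B 1, B 2) ∈ E1; rw [hB1, hB2]; exact hbc)
        | (show s(B 1, B 0) ∈ E1; rw [hB1, hB0, Sym2.eq_swap]; exact hab)
        | (show s(B 2, B 0) ∈ E1; rw [hB2, hB0, Sym2.eq_swap]; exact hac)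
        | (show s(B 2, B 1) ∈ E1; rw [hB2, hB1, Sym2.eq_swap]; exact hbc)
  have hvertS : ∀ i : Fin 3, B i ∈ S := by
    intro i
    fin_cases i
    · show B 0 ∈ S; rw [hB0]; exact haS
    · show B 1 ∈ S; rw [hB1]; exact hbS
    · show B 2 ∈ S; rw [hB2]; exact hcS
  have hvertK : ∀ i : Fin 3, B i ∈ K := by
    intro i
    apply subset_convexHull ℝ ({a,b,c} : Set Pt)
    fin_cases i
    · show B 0 ∈ _; rw [hB0]; exact Set.mem_insert _ _
    · show B 1 ∈ _; rw [hB1]; exact Set.mem_insert_of_mem _ (Set.mem_insert _ _)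
    · show B 2 ∈ _; rw [hB2]; exact Set.mem_insert_of_mem _ (Set.mem_insert_of_mem _ rfl)
  have hthird : ∀ i j : Fin 3, i ≠ j → ∃ k : Fin 3, k ≠ i ∧ k ≠ j := by decide
  have hsideInt : ∀ (i j : Fin 3), i ≠ j → ∀ y ∈ openSegment ℝ (B i) (B j),
      y ∉ interior K := by
    intro i j hij y hy hymem
    obtain ⟨k, hki, hkj⟩ := hthird i j hij
    have h0 : B.coord k y = 0 := coord_eq_zero_on_side B hki hkj hy
    rw [hKr, B.interior_convexHull] at hymem
    exact absurd h0 (ne_of_gt (hymem k))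
  have hKclosed : IsClosed K := (Set.toFinite ({a,b,c} : Set Pt)).isCompact_convexHull (𝕜 := ℝ) |>.isClosed
  -- claim: if an edge through an interior point has endpoint r, then r is a vertex
  have claim : ∀ r r' : Pt, r ∈ S → r' ∈ S → s(r, r') ∈ E1 → r ≠ r' →
      ∀ y, y ∈ openSegment ℝ r r' → y ∈ interior K → ∃ i : Fin 3, r = B i := by
    intro r r' hrS hr'S hfE hrr' y hy hyK
    by_cases hrK : r ∈ K
    · have hrnI : r ∉ interior K := hempty r hrS
      rw [hKr] at hrK hrnI
      obtain ⟨i, j, hij, hseg⟩ := frontier_tri B hrK hrnI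
      rw [← insert_endpoints_openSegment ℝ (B i) (B j)] at hseg
      rcases hseg with rfl | rfl | hseg
      · exact ⟨i, rfl⟩
      · exact ⟨j, rfl⟩
      exfalso
      have hBij : B i ≠ B j := B.ind.injective.ne hij
      obtain ⟨hcol', hri, hrj⟩ := openSegment_facts hseg hBij
      exact hgp r hrS (B i) (hvertS i) (B j) (hvertS j) hri hrj hBij hcol'
    · exfalso
      set A := Set.Icc (0:ℝ) 1 ∩ (lineMap y r : ℝ →ᵃ[ℝ] Pt) ⁻¹' K with hAdef
      have hAclosed : IsClosed A :=
        isClosed_Icc.inter (hKclosed.preimage AffineMap.lineMap_continuous)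
      have h0A : (0:ℝ) ∈ A := by
        refine ⟨⟨le_refl 0, zero_le_one⟩, ?_⟩
        simp only [Set.mem_preimage, lineMap_apply_zero]
        exact interior_subset hyK
      have hbdd : BddAbove A := BddAbove.mono Set.inter_subset_left bddAbove_Icc
      set t₀ := sSup A with ht₀def
      have ht₀A : t₀ ∈ A := hAclosed.csSup_mem ⟨0, h0A⟩ hbdd
      set z := lineMap y r t₀ with hzdef
      have hzK : z ∈ K := ht₀A.2
      have ht₀1 : t₀ < 1 := by
        rcases lt_or_eq_of_le ht₀A.1.2 with h | h
        · exact h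
        · exfalso; apply hrK
          have : z = r := by rw [hzdef, h, lineMap_apply_one]
          rw [← this]; exact hzK
      have ht₀0 : 0 < t₀ := by
        have hop : (lineMap y r : ℝ →ᵃ[ℝ] Pt) ⁻¹' (interior K) ∈ nhds (0:ℝ) := by
          apply (isOpen_interior.preimage AffineMap.lineMap_continuous).mem_nhds
          simp only [Set.mem_preimage, lineMap_apply_zero]
          exact hyK
        obtain ⟨ε, hε, hball⟩ := Metric.mem_nhds_iff.mp hop
        set t := min (ε/2) (1/2) with htdef
        have htpos : 0 < t := lt_min (by linarith) (by norm_num)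
        have htA : t ∈ A := by
          refine ⟨⟨le_of_lt htpos, le_trans (min_le_right _ _) (by norm_num)⟩, ?_⟩
          apply Set.mem_of_mem_of_subset _ (Set.Subset.trans hball
            (Set.preimage_mono interior_subset))
          rw [Metric.mem_ball, Real.dist_eq, sub_zero, abs_of_pos htpos]
          calc t ≤ ε/2 := min_le_left _ _
            _ < ε := by linarith
        exact lt_of_lt_of_le htpos (le_csSup hbdd htA)
      have hznI : z ∉ interior K := by
        intro hz
        have hop : (lineMap y r : ℝ →ᵃ[ℝ] Pt) ⁻¹' (interior K) ∈ nhds t₀ :=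
          (isOpen_interior.preimage AffineMap.lineMap_continuous).mem_nhds hz
        obtain ⟨ε, hε, hball⟩ := Metric.mem_nhds_iff.mp hop
        set t := min (t₀ + ε/2) ((t₀ + 1)/2) with htdef
        have htgt : t₀ < t := lt_min (by linarith) (by linarith)
        have htA : t ∈ A := by
          refine ⟨⟨by linarith, le_trans (min_le_right _ _) (by linarith)⟩, ?_⟩
          apply Set.mem_of_mem_of_subset _ (Set.Subset.trans hball
            (Set.preimage_mono interior_subset))
          rw [Metric.mem_ball, Real.dist_eq, abs_of_pos (by linarith : (0:ℝ) < t - t₀)]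
          calc t - t₀ ≤ (t₀ + ε/2) - t₀ := by
                have := min_le_left (t₀ + ε/2) ((t₀ + 1)/2); linarith
            _ < ε := by linarith
        have := le_csSup hbdd htA
        linarith
      have hzseg : z ∈ openSegment ℝ r r' := by
        apply openSegment_sub hy
        rw [openSegment_symm, openSegment_eq_image_lineMap]
        exact ⟨t₀, ⟨ht₀0, ht₀1⟩, rfl⟩
      rw [hKr] at hzK hznI
      obtain ⟨i, j, hij, hseg⟩ := frontier_tri B hzK hznI
      obtain ⟨hcolz, hzr, hzr'⟩ := openSegment_facts hzseg hrr'
      rw [← insert_endpoints_openSegment ℝ (B i) (B j)] at hseg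
      rcases hseg with hzeq | hzeq | hseg
      · exact hgp z (hzeq ▸ hvertS i) r hrS r' hr'S hzr hzr' hrr' hcolz
      · exact hgp z (hzeq ▸ hvertS j) r hrS r' hr'S hzr hzr' hrr' hcolz
      · have hfs : s(r, r') ≠ s(B i, B j) := by
          intro h
          rcases Sym2.eq_iff.mp h with ⟨h1, -⟩ | ⟨h1, -⟩
          · exact hrK (h1 ▸ hvertK i)
          · exact hrK (h1 ▸ hvertK j)
        have := hpl _ hfE _ (hsideE i j hij) hfs
        rw [Set.eq_empty_iff_forall_notMem] at this
        exact this z ⟨hzseg, hseg⟩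
  rw [Set.eq_empty_iff_forall_notMem]
  intro y hy
  induction f using Sym2.ind with
  | _ p q =>
  rw [segOf_mk] at hy
  obtain ⟨hyf, hyK⟩ := hy
  have hpS : p ∈ S := (hedge _ hf).2 p (by simp)
  have hqS : q ∈ S := (hedge _ hf).2 q (by simp)
  have hpq : p ≠ q := by rintro rfl; exact (hedge _ hf).1 (by simp)
  obtain ⟨i, hpBi⟩ := claim p q hpS hqS hf hpq y hyf hyK
  obtain ⟨j, hqBj⟩ := claim q p hqS hpS (Sym2.eq_swap ▸ hf) hpq.symm y
    ((openSegment_symm ℝ p q) ▸ hyf) hyK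
  have hij : i ≠ j := by rintro rfl; exact hpq (hpBi.trans hqBj.symm)
  exact hsideInt i j hij y (by rw [← hpBi, ← hqBj]; exact hyf) hyK

open AffineMap in
/-- The flipped diagonal does not cross any edge other than the flipped edge. -/
lemma flip_no_cross
    {S : Finset Pt} {E1 : Finset (Sym2 Pt)} (hgp : GenPos S)
    (hedge : IsEdgeSet S E1) (hpl : PlaneEdges E1)
    {a b c d x : Pt}
    (hfc : IsFace S E1 a b c) (hfd : IsFace S E1 a b d)
    (hxab : x ∈ openSegment ℝ a b) (hxcd : x ∈ openSegment ℝ c d)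
    {f : Sym2 Pt} (hf : f ∈ E1) (hfab : f ≠ s(a,b)) :
    segOf f ∩ openSegment ℝ c d = ∅ := by
  obtain ⟨haS, hbS, hcS, hne_ab, hne_ac, hne_bc⟩ := face_data hedge hfc
  obtain ⟨-, -, hdS, -, hne_ad, hne_bd⟩ := face_data hedge hfd
  obtain ⟨Bc, hBc0, hBc1, hBc2, hBcr⟩ := exists_triBasis a b c
    (hgp a haS b hbS c hcS hne_ab hne_ac hne_bc)
  obtain ⟨Bd, hBd0, hBd1, hBd2, hBdr⟩ := exists_triBasis a b d
    (hgp a haS b hbS d hdS hne_ab hne_ad hne_bd)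
  rw [Set.eq_empty_iff_forall_notMem]
  rintro y ⟨hyf, hycd⟩
  rw [openSegment_eq_image_lineMap] at hycd hxcd
  obtain ⟨s₀, hs₀, hx⟩ := hxcd
  obtain ⟨s, hs, rfl⟩ := hycd
  rcases lt_trichotomy s s₀ with h | h | h
  · -- inside triangle a b c
    have hy' : lineMap c d s ∈ openSegment ℝ c x := by
      rw [openSegment_eq_image_lineMap]
      refine ⟨s / s₀, ⟨div_pos hs.1 hs₀.1, (div_lt_one hs₀.1).mpr h⟩, ?_⟩
      rw [← hx, lineMap_apply_module, lineMap_apply_module, lineMap_apply_module]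
      have hns : s₀ ≠ 0 := ne_of_gt hs₀.1
      match_scalars <;> field_simp <;> ring
    have hyI : lineMap c d s ∈ interior (convexHull ℝ ({a,b,c} : Set Pt)) := by
      rw [← hBcr]
      exact mem_interior_tri Bc (by rw [hBc0, hBc1]; exact hxab) (by rw [hBc2]; exact hy')
    have hdst := face_interior_disjoint hgp hedge hpl hfc hf
    rw [Set.eq_empty_iff_forall_notMem] at hdst
    exact hdst _ ⟨hyf, hyI⟩
  · -- y = x lies on the edge ab
    subst h
    have hdst := hpl _ hf _ hfc.1 hfab
    rw [Set.eq_empty_iff_forall_notMem] at hdst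
    exact hdst _ ⟨hyf, by rw [segOf_mk, hx]; exact hxab⟩
  · -- inside triangle a b d
    have hy' : lineMap c d s ∈ openSegment ℝ d x := by
      rw [openSegment_eq_image_lineMap]
      refine ⟨(1 - s) / (1 - s₀), ⟨div_pos (by linarith [hs.2]) (by linarith [hs₀.2]),
        (div_lt_one (by linarith [hs₀.2])).mpr (by linarith)⟩, ?_⟩
      rw [← hx, lineMap_apply_module, lineMap_apply_module, lineMap_apply_module]
      have hns : (1:ℝ) - s₀ ≠ 0 := ne_of_gt (by linarith [hs₀.2])
      match_scalars <;> field_simp <;> ring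
    have hyI : lineMap c d s ∈ interior (convexHull ℝ ({a,b,d} : Set Pt)) := by
      rw [← hBdr]
      exact mem_interior_tri Bd (by rw [hBd0, hBd1]; exact hxab) (by rw [hBd2]; exact hy')
    have hdst := face_interior_disjoint hgp hedge hpl hfd hf
    rw [Set.eq_empty_iff_forall_notMem] at hdst
    exact hdst _ ⟨hyf, hyI⟩

/-- Main auxiliary lemma: a shared edge of the two triangulation layers of a maximal
biplane graph is not flippable in the first layer. -/
lemma not_flippable_shared
    {S : Finset Pt} {E T1 T2 : Finset (Sym2 Pt)} (hgp : GenPos S)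
    (hmax : MaxBiplane S E) (h1 : MaxPlane S T1) (h2 : MaxPlane S T2)
    (hE : E = T1 ∪ T2) {e : Sym2 Pt} (he1 : e ∈ T1) (he2 : e ∈ T2) :
    ¬ Flippable S T1 e := by
  rintro ⟨a, b, c, d, rfl, hcS, hdS, hfc, hfd, x, hxab, hxcd⟩
  obtain ⟨haS, hbS, -, hne_ab, hne_ac, hne_bc⟩ := face_data h1.1 hfc
  obtain ⟨-, -, -, -, hne_ad, hne_bd⟩ := face_data h1.1 hfd
  have hcd : c ≠ d := by
    rintro rfl
    rw [openSegment_same] at hxcd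
    rw [Set.mem_singleton_iff] at hxcd
    subst hxcd
    obtain ⟨hcol, hca, hcb⟩ := openSegment_facts hxab hne_ab
    exact hgp x hcS a haS b hbS hca hcb hne_ab hcol
  have hkey : ∀ T : Finset (Sym2 Pt), PlaneEdges T → s(a,b) ∈ T → s(c,d) ∉ T := by
    intro T hT habT hcdT
    have hne : (s(c,d) : Sym2 Pt) ≠ s(a,b) := by
      intro h
      rcases Sym2.eq_iff.mp h with ⟨h1', -⟩ | ⟨-, h2'⟩
      · exact hne_ac h1'.symm
      · exact hne_ad h2'.symm
    have := hT _ hcdT _ habT hne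
    rw [Set.eq_empty_iff_forall_notMem] at this
    exact this x ⟨hxcd, hxab⟩
  have hcd1 : (s(c,d) : Sym2 Pt) ∉ T1 := hkey T1 h1.2.1 he1
  have hcd2 : (s(c,d) : Sym2 Pt) ∉ T2 := hkey T2 h2.2.1 he2
  have hcdE : (s(c,d) : Sym2 Pt) ∉ E := by
    rw [hE, Finset.mem_union]
    rintro (h | h)
    exacts [hcd1 h, hcd2 h]
  have hdiag : ¬ (s(c,d) : Sym2 Pt).IsDiag := by simp [hcd]
  have hmem : ∀ p ∈ (s(c,d) : Sym2 Pt), p ∈ S := by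
    intro p hp
    rcases Sym2.mem_iff.mp hp with rfl | rfl
    exacts [hcS, hdS]
  apply hmax.2.2 _ hdiag hmem hcdE
  refine ⟨(insert s(c,d) (T1.erase s(a,b))) \ T2, T2, ?_, Finset.sdiff_disjoint, ?_, h2.2.1⟩
  · ext g
    simp only [hE, Finset.mem_insert, Finset.mem_union, Finset.mem_sdiff, Finset.mem_erase]
    constructor
    · rintro (rfl | hg | hg)
      · exact Or.inl ⟨Or.inl rfl, hcd2⟩
      · by_cases h2g : g ∈ T2
        · exact Or.inr h2g
        · exact Or.inl ⟨Or.inr ⟨fun h => h2g (h ▸ he2), hg⟩, h2g⟩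
      · exact Or.inr hg
    · rintro (⟨(rfl | ⟨-, hg⟩), -⟩ | hg)
      · exact Or.inl rfl
      · exact Or.inr (Or.inl hg)
      · exact Or.inr (Or.inr hg)
  · have hplane : PlaneEdges (insert s(c,d) (T1.erase s(a,b))) := by
      intro e1 he1' e2 he2' hne
      rcases Finset.mem_insert.mp he1' with rfl | he1'' <;>
        rcases Finset.mem_insert.mp he2' with rfl | he2''
      · exact absurd rfl hne
      · obtain ⟨hne2, he2T⟩ := Finset.mem_erase.mp he2''
        have := flip_no_cross hgp h1.1 h1.2.1 hfc hfd hxab hxcd he2T hne2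
        rw [Set.inter_comm] at this
        exact this
      · obtain ⟨hne1, he1T⟩ := Finset.mem_erase.mp he1''
        exact flip_no_cross hgp h1.1 h1.2.1 hfc hfd hxab hxcd he1T hne1
      · exact h1.2.1 _ (Finset.mem_erase.mp he1'').2 _ (Finset.mem_erase.mp he2'').2 hne
    intro e1 he1' e2 he2' hne
    exact hplane e1 (Finset.mem_sdiff.mp he1').1 e2 (Finset.mem_sdiff.mp he2').1 hne

/-- In a maximal biplane graph decomposed into two triangulations, no shared edge
is flippable in either triangulation. -/
theorem shared_edge_not_flippable
    (S : Finset Pt) (E E' E'' : Finset (Sym2 Pt))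
    (hgp : GenPos S) (hmax : MaxBiplane S E)
    (hT' : MaxPlane S E') (hT'' : MaxPlane S E'')
    (hE : E = E' ∪ E'') :
    ∀ e ∈ E' ∩ E'', ¬ Flippable S E' e ∧ ¬ Flippable S E'' e := by
  intro e he
  rw [Finset.mem_inter] at he
  exact ⟨not_flippable_shared hgp hmax hT' hT'' hE he.1 he.2,
    not_flippable_shared hgp hmax hT'' hT' (hE.trans (Finset.union_comm _ _)) he.2 he.1⟩
end

section
/- Let S be a set of n ≥ 3 points in the plane in general position and in convex position (i.e., every point of S is a convex-hull vertex of S). Then every maximal biplane graph G = (S,E) on S has exactly 3n − 6 edges. -/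
open Finset

/-- Signed area / orientation determinant. -/
def orient (a b c : Pt) : ℝ :=
  (b.1 - a.1) * (c.2 - a.2) - (b.2 - a.2) * (c.1 - a.1)

lemma orient_cyclic (a b c : Pt) : orient a b c = orient b c a := by
  unfold orient; ring

lemma orient_swap (a b c : Pt) : orient a b c = - orient a c b := by
  unfold orient; ring

lemma orient_affine (a b c d : Pt) (t : ℝ) :
    orient a b ((1 - t) • c + t • d) = (1 - t) * orient a b c + t * orient a b d := by
  unfold orient
  simp only [Prod.fst_add, Prod.snd_add, Prod.smul_fst, Prod.smul_snd, smul_eq_mul]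
  ring

lemma collinear_of_orient_eq_zero {p q r : Pt} (hpq : p ≠ q) (h : orient p q r = 0) :
    Collinear ℝ ({p, q, r} : Set Pt) := by
  rw [collinear_iff_of_mem (Set.mem_insert p {q, r})]
  refine ⟨q - p, ?_⟩
  intro x hx
  rcases hx with rfl | hx
  · exact ⟨0, by simp⟩
  rcases hx with rfl | hx
  · exact ⟨1, by simp⟩
  rcases hx with rfl
  -- x = r
  unfold orient at h
  have hne : q.1 - p.1 ≠ 0 ∨ q.2 - p.2 ≠ 0 := by
    by_contra hcon
    push_neg at hcon
    apply hpq
    have h1 : q.1 = p.1 := by linarith [hcon.1]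
    have h2 : q.2 = p.2 := by linarith [hcon.2]
    exact Prod.ext h1.symm h2.symm
  rcases hne with hne | hne
  · refine ⟨(x.1 - p.1) / (q.1 - p.1), ?_⟩
    have h1 : ((x.1 - p.1) / (q.1 - p.1)) • (q - p) +ᵥ p = x := by
      apply Prod.ext
      · simp only [Prod.fst_add, Prod.smul_fst, Prod.fst_sub, smul_eq_mul, vadd_eq_add]
        field_simp
        ring
      · simp only [Prod.snd_add, Prod.smul_snd, Prod.snd_sub, smul_eq_mul, vadd_eq_add]
        field_simp
        linear_combination -h
    exact h1.symm
  · refine ⟨(x.2 - p.2) / (q.2 - p.2), ?_⟩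
    have h1 : ((x.2 - p.2) / (q.2 - p.2)) • (q - p) +ᵥ p = x := by
      apply Prod.ext
      · simp only [Prod.fst_add, Prod.smul_fst, Prod.fst_sub, smul_eq_mul, vadd_eq_add]
        field_simp
        linear_combination h
      · simp only [Prod.snd_add, Prod.smul_snd, Prod.snd_sub, smul_eq_mul, vadd_eq_add]
        field_simp
        ring
    exact h1.symm

lemma orient_of_mem_openSegment {a b x : Pt} (hx : x ∈ openSegment ℝ a b) :
    ∃ t : ℝ, 0 < t ∧ t < 1 ∧ x = (1 - t) • a + t • b := by
  rw [openSegment_eq_image] at hx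
  rcases hx with ⟨t, ht, rfl⟩
  exact ⟨t, ht.1, ht.2, rfl⟩

/-- Separation: if `c` and `d` are strictly on the positive side of line `ab`,
then the open segments `cd` and `ab` are disjoint. -/
lemma seg_disjoint_of_same_side {a b c d : Pt} (hc : 0 < orient a b c)
    (hd : 0 < orient a b d) : openSegment ℝ c d ∩ openSegment ℝ a b = ∅ := by
  ext x
  simp only [Set.mem_inter_iff, Set.mem_empty_iff_false, iff_false, not_and]
  intro h1 h2
  obtain ⟨s, hs0, hs1, rfl⟩ := orient_of_mem_openSegment h1
  obtain ⟨t, ht0, ht1, heq⟩ := orient_of_mem_openSegment h2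
  have e1 : orient a b ((1 - s) • c + s • d) = (1 - s) * orient a b c + s * orient a b d :=
    orient_affine a b c d s
  have e2 : orient a b ((1 - t) • a + t • b) = (1 - t) * orient a b a + t * orient a b b :=
    orient_affine a b a b t
  have ha : orient a b a = 0 := by unfold orient; ring
  have hb : orient a b b = 0 := by unfold orient; ring
  rw [heq, e2, ha, hb] at e1
  nlinarith

/-- Two open segments sharing the endpoint `p` are disjoint unless collinear. -/
lemma seg_disjoint_of_shared' {p q r : Pt} (horient : orient p q r ≠ 0) :
    openSegment ℝ p q ∩ openSegment ℝ p r = ∅ := by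
  ext x
  simp only [Set.mem_inter_iff, Set.mem_empty_iff_false, iff_false, not_and]
  intro h1 h2
  obtain ⟨t, ht0, ht1, rfl⟩ := orient_of_mem_openSegment h1
  obtain ⟨s, hs0, hs1, heq⟩ := orient_of_mem_openSegment h2
  apply horient
  have h1' : t * (q.1 - p.1) = s * (r.1 - p.1) := by
    have := congrArg Prod.fst heq
    simp only [Prod.fst_add, Prod.smul_fst, smul_eq_mul] at this
    linarith
  have h2' : t * (q.2 - p.2) = s * (r.2 - p.2) := by
    have := congrArg Prod.snd heq
    simp only [Prod.snd_add, Prod.smul_snd, smul_eq_mul] at this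
    linarith
  unfold orient
  have ht : t ≠ 0 := ne_of_gt ht0
  have key : t * ((q.1 - p.1) * (r.2 - p.2) - (q.2 - p.2) * (r.1 - p.1)) = 0 := by
    linear_combination (r.2 - p.2) * h1' - (r.1 - p.1) * h2'
  rcases mul_eq_zero.mp key with h | h
  · exact absurd h ht
  · exact h

/-- Crossing: if `b,d` are strictly separated by line `ac` and `a,c` strictly
separated by line `bd`, the open segments meet. -/
lemma seg_cross {a b c d : Pt} (hac : a ≠ c)
    (h1 : orient a c b < 0) (h2 : 0 < orient a c d)
    (h3 : 0 < orient b d a) (h4 : orient b d c < 0) :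
    (openSegment ℝ a c ∩ openSegment ℝ b d).Nonempty := by
  set Fb := orient a c b with hFb
  set Fd := orient a c d with hFd
  set s : ℝ := Fb / (Fb - Fd) with hs
  have hsden : Fb - Fd < 0 := by linarith
  have hs0 : 0 < s := by
    apply div_pos_of_neg_of_neg h1 hsden
  have hs1 : s < 1 := by
    rw [hs, div_lt_one_of_neg hsden]
    linarith
  set x : Pt := (1 - s) • b + s • d with hx
  have hxbd : x ∈ openSegment ℝ b d := by
    rw [openSegment_eq_image]
    exact ⟨s, ⟨hs0, hs1⟩, rfl⟩
  -- x is on line ac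
  have hFx : orient a c x = 0 := by
    rw [hx, orient_affine]
    rw [hs]
    have hden : Fb - Fd ≠ 0 := ne_of_lt hsden
    field_simp
    ring
  -- write x as affine combination of a and c
  set u1 : ℝ := c.1 - a.1 with hu1
  set u2 : ℝ := c.2 - a.2 with hu2
  have hN : 0 < u1 ^ 2 + u2 ^ 2 := by
    rcases (Prod.ext_iff.not.mp hac) with h
    push_neg at h
    by_cases h1' : a.1 = c.1
    · have h2' := h h1'
      have : u2 ≠ 0 := by rw [hu2]; intro hc; apply h2'; linarith
      positivity
    · have : u1 ≠ 0 := by rw [hu1]; intro hc; apply h1'; linarith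
      positivity
  set t : ℝ := ((x.1 - a.1) * u1 + (x.2 - a.2) * u2) / (u1 ^ 2 + u2 ^ 2) with hts
  have hdet : u1 * (x.2 - a.2) - u2 * (x.1 - a.1) = 0 := by
    unfold orient at hFx
    rw [hu1, hu2]; linear_combination hFx
  have hxac : x = (1 - t) • a + t • c := by
    have hN' : u1 ^ 2 + u2 ^ 2 ≠ 0 := ne_of_gt hN
    apply Prod.ext
    · simp only [Prod.fst_add, Prod.smul_fst, smul_eq_mul]
      rw [hts]
      field_simp
      linear_combination (-u2) * hdet
    · simp only [Prod.snd_add, Prod.smul_snd, smul_eq_mul]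
      rw [hts]
      field_simp
      linear_combination u1 * hdet
  -- t ∈ (0,1) from the other line
  have hGx : orient b d x = 0 := by
    rw [hx, orient_affine]
    have : orient b d b = 0 := by unfold orient; ring
    have h2' : orient b d d = 0 := by unfold orient; ring
    rw [this, h2']; ring
  have hGt : (1 - t) * orient b d a + t * orient b d c = 0 := by
    rw [← orient_affine, ← hxac, hGx]
  have ht0 : 0 < t := by nlinarith
  have ht1 : t < 1 := by nlinarith
  refine ⟨x, ?_, hxbd⟩
  rw [openSegment_eq_image]
  exact ⟨t, ⟨ht0, ht1⟩, hxac.symm⟩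

/-- Barycentric membership in a triangle. -/
lemma mem_triangle_of_orient {a b c x : Pt} (hA : 0 < orient a b c)
    (h1 : 0 ≤ orient a b x) (h2 : 0 ≤ orient b c x) (h3 : 0 ≤ orient c a x) :
    x ∈ convexHull ℝ ({a, b, c} : Set Pt) := by
  set α := orient b c x with hα
  set β := orient c a x with hβ
  set γ := orient a b x with hγ
  have hsum : α + β + γ = orient a b c := by
    rw [hα, hβ, hγ]; unfold orient; ring
  have key1 : orient a b c * x.1 = α * a.1 + β * b.1 + γ * c.1 := by
    rw [hα, hβ, hγ]; unfold orient; ring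
  have key2 : orient a b c * x.2 = α * a.2 + β * b.2 + γ * c.2 := by
    rw [hα, hβ, hγ]; unfold orient; ring
  have hA' : orient a b c ≠ 0 := ne_of_gt hA
  have ha : a ∈ convexHull ℝ ({a, b, c} : Set Pt) :=
    subset_convexHull ℝ _ (by simp)
  have hb : b ∈ convexHull ℝ ({a, b, c} : Set Pt) :=
    subset_convexHull ℝ _ (by simp)
  have hc : c ∈ convexHull ℝ ({a, b, c} : Set Pt) :=
    subset_convexHull ℝ _ (by simp)
  by_cases hβγ : β + γ = 0
  · have hb0 : β = 0 := by linarith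
    have hg0 : γ = 0 := by linarith
    have hax : x = a := by
      have hαA : α = orient a b c := by linarith
      apply Prod.ext
      · apply mul_left_cancel₀ hA'
        rw [key1, hb0, hg0, hαA]; ring
      · apply mul_left_cancel₀ hA'
        rw [key2, hb0, hg0, hαA]; ring
    rw [hax]; exact ha
  · have hβγ' : 0 < β + γ := lt_of_le_of_ne (by linarith) (Ne.symm hβγ)
    set y : Pt := (β / (β + γ)) • b + (γ / (β + γ)) • c with hy
    have hymem : y ∈ convexHull ℝ ({a, b, c} : Set Pt) := by
      have : y ∈ segment ℝ b c :=
        ⟨β / (β + γ), γ / (β + γ), by positivity, by positivity,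
          by field_simp, rfl⟩
      exact segment_subset_convexHull (by simp) (by simp) this
    have hxmem : x ∈ segment ℝ a y := by
      refine ⟨α / orient a b c, (β + γ) / orient a b c, by positivity, by positivity,
        by field_simp; linarith, ?_⟩
      rw [hy, smul_add, smul_smul, smul_smul]
      have e1 : (β + γ) / orient a b c * (β / (β + γ)) = β / orient a b c := by
        field_simp
      have e2 : (β + γ) / orient a b c * (γ / (β + γ)) = γ / orient a b c := by
        field_simp
      rw [e1, e2]
      apply Prod.ext
      · simp only [Prod.fst_add, Prod.smul_fst, smul_eq_mul]
        field_simp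
        linarith [key1]
      · simp only [Prod.snd_add, Prod.smul_snd, smul_eq_mul]
        field_simp
        linarith [key2]
    exact (convex_convexHull ℝ _).segment_subset ha hymem hxmem

/-- Two index pairs interleave (cross) on the circle `0, 1, …, n-1`. -/
def Ilv (p q : ℕ × ℕ) : Prop :=
  (p.1 < q.1 ∧ q.1 < p.2 ∧ p.2 < q.2) ∨ (q.1 < p.1 ∧ p.1 < q.2 ∧ q.2 < p.2)

/-- `p` is a diagonal of the convex polygon with vertex set `V` (indices). -/
def DiagOn (V : Finset ℕ) (p : ℕ × ℕ) : Prop :=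
  p.1 ∈ V ∧ p.2 ∈ V ∧ p.1 < p.2 ∧ (∃ k ∈ V, p.1 < k ∧ k < p.2) ∧
    (∃ k ∈ V, k < p.1 ∨ p.2 < k)

lemma ilv_symm {p q : ℕ × ℕ} (h : Ilv p q) : Ilv q p := by
  rcases h with h | h
  · exact Or.inr ⟨h.1, h.2.1, h.2.2⟩
  · exact Or.inl ⟨h.1, h.2.1, h.2.2⟩

/-- A family of pairwise noncrossing diagonals of a convex `n`-gon has at most
`n - 3` members. -/
lemma noncross_card_le : ∀ (F : Finset (ℕ × ℕ)) (V : Finset ℕ), 3 ≤ V.card →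
    (∀ p ∈ F, DiagOn V p) →
    (∀ p ∈ F, ∀ q ∈ F, p ≠ q → ¬ Ilv p q) → F.card + 3 ≤ V.card := by
  intro F
  induction F using Finset.strongInduction with
  | _ F ih =>
    intro V hV hd hnc
    rcases F.eq_empty_or_nonempty with rfl | hne
    · simpa using hV
    obtain ⟨p, hpF, hmin⟩ :=
      F.exists_min_image (fun p => (V.filter (fun k => p.1 < k ∧ k < p.2)).card) hne
    obtain ⟨i, j⟩ := p
    set I := V.filter (fun k => i < k ∧ k < j) with hI
    obtain ⟨hiV, hjV, hij, ⟨w, hwV, hw1, hw2⟩, ⟨z, hzV, hz⟩⟩ := hd (i, j) hpF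
    have hwI : w ∈ I := by simp [hI, hwV, hw1, hw2]
    have hIne : I.Nonempty := ⟨w, hwI⟩
    -- no chord other than (i,j) has an endpoint strictly inside (i,j)
    have hkey : ∀ q ∈ F, q ≠ (i, j) →
        ¬ (i < q.1 ∧ q.1 < j) ∧ ¬ (i < q.2 ∧ q.2 < j) := by
      rintro ⟨k, l⟩ hqF hqne
      obtain ⟨hkV, hlV, hkl, -, -⟩ := hd (k, l) hqF
      have hni : ¬ Ilv (i, j) (k, l) := hnc (i, j) hpF (k, l) hqF (by
        intro hc; exact hqne hc.symm)
      have hni' : ¬ ((i < k ∧ k < j ∧ j < l) ∨ (k < i ∧ i < l ∧ l < j)) := by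
        intro hc; exact hni (by unfold Ilv; simpa using hc)
      simp only at hkl ⊢
      by_contra hcon
      have hcon' : (i < k ∧ k < j) ∨ (i < l ∧ l < j) := by tauto
      have hbox : i ≤ k ∧ l ≤ j := by omega
      -- interior of (k,l) is strictly contained in interior of (i,j)
      have hsub : V.filter (fun m => k < m ∧ m < l) ⊆ I := by
        intro m hm
        simp only [mem_filter] at hm
        simp only [hI, mem_filter]
        exact ⟨hm.1, by omega, by omega⟩
      have hproper : ∃ m ∈ I, m ∉ V.filter (fun m => k < m ∧ m < l) := by
        rcases hcon' with hc | hc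
        · refine ⟨k, ?_, by simp⟩
          simp only [hI, mem_filter]
          exact ⟨hkV, hc⟩
        · refine ⟨l, ?_, by simp⟩
          simp only [hI, mem_filter]
          exact ⟨hlV, hc⟩
      have hlt : (V.filter (fun m => k < m ∧ m < l)).card < I.card := by
        obtain ⟨m, hm1, hm2⟩ := hproper
        exact Finset.card_lt_card (Finset.ssubset_iff_of_subset hsub |>.mpr ⟨m, hm1, hm2⟩)
      have := hmin (k, l) hqF
      simp only [hI] at hlt this
      omega
    -- pass to V' = V \ I, F' = F.erase (i,j)
    set V' := V \ I with hV'
    set F' := F.erase (i, j) with hF'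
    have hiV' : i ∈ V' := by simp [hV', hI, hiV]
    have hjV' : j ∈ V' := by simp [hV', hI, hjV]
    have hzV' : z ∈ V' := by
      simp only [hV', hI, mem_sdiff, mem_filter]
      exact ⟨hzV, by omega⟩
    have hV'3 : 3 ≤ V'.card := by
      have hsub : ({z, i, j} : Finset ℕ) ⊆ V' := by
        intro m hm
        simp only [mem_insert, mem_singleton] at hm
        rcases hm with rfl | rfl | rfl <;> assumption
      have hcard : ({z, i, j} : Finset ℕ).card = 3 := by
        rw [Finset.card_insert_of_notMem (by simp; omega),
          Finset.card_insert_of_notMem (by simp; omega), Finset.card_singleton]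
      calc 3 = ({z, i, j} : Finset ℕ).card := hcard.symm
        _ ≤ V'.card := Finset.card_le_card hsub
    have hd' : ∀ q ∈ F', DiagOn V' q := by
      rintro ⟨k, l⟩ hqF'
      have hqF : (k, l) ∈ F := Finset.mem_of_mem_erase hqF'
      have hqne : (k, l) ≠ (i, j) := Finset.ne_of_mem_erase hqF'
      obtain ⟨hkV, hlV, hkl, ⟨w', hw'V, hw'1, hw'2⟩, ⟨z', hz'V, hz'⟩⟩ := hd (k, l) hqF
      obtain ⟨hk, hl⟩ := hkey (k, l) hqF hqne
      simp only at hk hl hkl ⊢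
      have hkV' : k ∈ V' := by
        simp only [hV', hI, mem_sdiff, mem_filter]; exact ⟨hkV, by omega⟩
      have hlV' : l ∈ V' := by
        simp only [hV', hI, mem_sdiff, mem_filter]; exact ⟨hlV, by omega⟩
      refine ⟨hkV', hlV', hkl, ?_, ?_⟩
      · -- interior witness
        by_cases hcase : k ≤ i ∧ j ≤ l
        · -- nested around (i,j)
          rcases lt_or_eq_of_le hcase.1 with hki | hki
          · exact ⟨i, hiV', by omega⟩
          · have hjl : j < l := by
              rcases lt_or_eq_of_le hcase.2 with h | h
              · exact h
              · exfalso; apply hqne; rw [hki, h]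
            exact ⟨j, hjV', by omega⟩
        · -- (k,l) on one side: its interior avoids I
          refine ⟨w', ?_, hw'1, hw'2⟩
          simp only [hV', hI, mem_sdiff, mem_filter]
          refine ⟨hw'V, ?_⟩
          intro hcon2
          -- w' strictly inside both (k,l) and (i,j): impossible given ¬nested & sides
          omega
      · -- exterior witness
        by_cases hcase : k ≤ i ∧ j ≤ l
        · refine ⟨z', ?_, hz'⟩
          simp only [hV', hI, mem_sdiff, mem_filter]
          exact ⟨hz'V, by omega⟩
        · by_cases hli : l ≤ i
          · exact ⟨j, hjV', by omega⟩
          · have hkj : j ≤ k := by omega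
            exact ⟨i, hiV', by omega⟩
    have hnc' : ∀ p ∈ F', ∀ q ∈ F', p ≠ q → ¬ Ilv p q := fun p hp q hq =>
      hnc p (Finset.mem_of_mem_erase hp) q (Finset.mem_of_mem_erase hq)
    have hIH := ih F' (Finset.erase_ssubset hpF) V' hV'3 hd' hnc'
    have hVI : V'.card = V.card - I.card := Finset.card_sdiff_of_subset (Finset.filter_subset _ _)
    have hIcard : 1 ≤ I.card := Finset.card_pos.mpr hIne
    have hIle : I.card ≤ V.card := Finset.card_le_card (Finset.filter_subset _ _)
    have hFc : F.card = F'.card + 1 := by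
      rw [hF', Finset.card_erase_of_mem hpF]
      have : 1 ≤ F.card := Finset.card_pos.mpr hne
      omega
    omega

lemma four_in (V : Finset ℕ) (h4 : 4 ≤ V.card) :
    ∃ a b c d : ℕ, a ∈ V ∧ b ∈ V ∧ c ∈ V ∧ d ∈ V ∧ a < b ∧ b < c ∧ c < d := by
  obtain ⟨T, hTsub, hTcard⟩ := Finset.exists_subset_card_eq h4
  have hlen : (T.sort (· ≤ ·)).length = 4 := by rw [Finset.length_sort, hTcard]
  have hsort : List.Pairwise (· < ·) (T.sort (· ≤ ·)) :=
    List.sortedLT_iff_pairwise.mp (Finset.sortedLT_sort T)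
  have hmem : ∀ x ∈ T.sort (· ≤ ·), x ∈ V := fun x hx =>
    hTsub ((Finset.mem_sort _).mp hx)
  rcases hl : T.sort (· ≤ ·) with _ | ⟨a, _ | ⟨b, _ | ⟨c, _ | ⟨d, _ | e⟩⟩⟩⟩ <;>
    rw [hl] at hlen <;> simp at hlen
  rw [hl] at hsort hmem
  simp only [List.pairwise_cons, List.mem_cons] at hsort
  refine ⟨a, b, c, d, ?_, ?_, ?_, ?_, ?_, ?_, ?_⟩
  · exact hmem a (by simp)
  · exact hmem b (by simp)
  · exact hmem c (by simp)
  · exact hmem d (by simp)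
  · exact hsort.1 b (by simp)
  · exact hsort.2.1 c (by simp)
  · exact hsort.2.2.1 d (by simp)

/-- If a noncrossing family of diagonals is not of full size `n-3`, there are two
*crossing* diagonals, each compatible with the family and not in it. -/
lemma noncross_extend : ∀ (F : Finset (ℕ × ℕ)) (V : Finset ℕ),
    (∀ p ∈ F, DiagOn V p) →
    (∀ p ∈ F, ∀ q ∈ F, p ≠ q → ¬ Ilv p q) →
    F.card + 3 < V.card →
    ∃ a b c d : ℕ, a ∈ V ∧ b ∈ V ∧ c ∈ V ∧ d ∈ V ∧ a < b ∧ b < c ∧ c < d ∧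
      (a, c) ∉ F ∧ (b, d) ∉ F ∧
      (∀ p ∈ F, ¬ Ilv (a, c) p) ∧ (∀ p ∈ F, ¬ Ilv (b, d) p) := by
  intro F
  induction F using Finset.strongInduction with
  | _ F ih =>
    intro V hd hnc hcard
    rcases F.eq_empty_or_nonempty with rfl | hne
    · obtain ⟨a, b, c, d, h⟩ := four_in V (by simp at hcard; omega)
      exact ⟨a, b, c, d, h.1, h.2.1, h.2.2.1, h.2.2.2.1, h.2.2.2.2.1, h.2.2.2.2.2.1,
        h.2.2.2.2.2.2, by simp, by simp, by simp, by simp⟩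
    obtain ⟨⟨i, j⟩, hpF⟩ := hne
    set I := V.filter (fun k => i < k ∧ k < j) with hI
    obtain ⟨hiV, hjV, hij, ⟨w, hwV, hw1, hw2⟩, ⟨z, hzV, hz⟩⟩ := hd (i, j) hpF
    have hwI : w ∈ I := by simp [hI, hwV, hw1, hw2]
    set VA := V.filter (fun m => i ≤ m ∧ m ≤ j) with hVA
    set VB := V \ I with hVB
    set FA := F.filter (fun p => i ≤ p.1 ∧ p.2 ≤ j) with hFA
    set FB := F \ FA with hFB
    set FA' := FA.erase (i, j) with hFA'
    have hijFA : (i, j) ∈ FA := by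
      simp only [hFA, mem_filter]
      exact ⟨hpF, le_refl i, le_refl j⟩
    -- basic memberships
    have hiVB : i ∈ VB := by simp [hVB, hI, hiV]
    have hjVB : j ∈ VB := by simp [hVB, hI, hjV]
    have hiVA : i ∈ VA := by
      simp only [hVA, mem_filter]; exact ⟨hiV, le_refl i, le_of_lt hij⟩
    have hjVA : j ∈ VA := by
      simp only [hVA, mem_filter]; exact ⟨hjV, le_of_lt hij, le_refl j⟩
    -- endpoints of FB chords are never strictly inside (i,j)
    have hBkey : ∀ q ∈ FB, ¬ (i < q.1 ∧ q.1 < j) ∧ ¬ (i < q.2 ∧ q.2 < j) := by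
      rintro ⟨k, l⟩ hqFB
      have hqF : (k, l) ∈ F := (Finset.mem_sdiff.mp hqFB).1
      have hqFA : (k, l) ∉ FA := (Finset.mem_sdiff.mp hqFB).2
      have hqna : ¬ (i ≤ k ∧ l ≤ j) := by
        intro hc
        exact hqFA (by simp only [hFA, mem_filter]; exact ⟨hqF, hc.1, hc.2⟩)
      obtain ⟨hkV, hlV, hkl, -, -⟩ := hd (k, l) hqF
      have hqne : (k, l) ≠ (i, j) := by
        intro hc
        injection hc with h1 h2
        subst h1; subst h2
        exact hqna ⟨le_refl _, le_refl _⟩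
      have hni : ¬ Ilv (i, j) (k, l) := hnc (i, j) hpF (k, l) hqF (by
        intro hc; exact hqne hc.symm)
      have hni' : ¬ ((i < k ∧ k < j ∧ j < l) ∨ (k < i ∧ i < l ∧ l < j)) := by
        intro hc; exact hni (by unfold Ilv; simpa using hc)
      simp only at hkl ⊢
      omega
    -- cardinalities
    have hVAcard : VA.card = I.card + 2 := by
      have hVAeq : VA = insert i (insert j I) := by
        ext m
        simp only [hVA, hI, mem_filter, mem_insert]
        constructor
        · rintro ⟨hmV, h1, h2⟩
          rcases eq_or_lt_of_le h1 with rfl | h1'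
          · exact Or.inl rfl
          rcases eq_or_lt_of_le h2 with rfl | h2'
          · exact Or.inr (Or.inl rfl)
          exact Or.inr (Or.inr ⟨hmV, h1', h2'⟩)
        · rintro (rfl | rfl | ⟨hmV, h1, h2⟩)
          · exact ⟨hiV, le_refl m, le_of_lt hij⟩
          · exact ⟨hjV, le_of_lt hij, le_refl m⟩
          · exact ⟨hmV, le_of_lt h1, le_of_lt h2⟩
      rw [hVAeq, Finset.card_insert_of_notMem (by simp [hI]; omega),
        Finset.card_insert_of_notMem (by simp [hI])]
    have hVBcard : VB.card = V.card - I.card :=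
      Finset.card_sdiff_of_subset (Finset.filter_subset _ _)
    have hIcard1 : 1 ≤ I.card := Finset.card_pos.mpr ⟨w, hwI⟩
    have hIcardV : I.card + 2 ≤ V.card := by
      calc I.card + 2 = VA.card := hVAcard.symm
        _ ≤ V.card := Finset.card_le_card (Finset.filter_subset _ _)
    have hFAsub : FA ⊆ F := Finset.filter_subset _ _
    have hFcards : FA'.card + 1 + FB.card = F.card := by
      have h1 : FA'.card = FA.card - 1 := by
        rw [hFA', Finset.card_erase_of_mem hijFA]
      have h2 : FB.card = F.card - FA.card := Finset.card_sdiff_of_subset hFAsub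
      have h3 : 1 ≤ FA.card := Finset.card_pos.mpr ⟨(i, j), hijFA⟩
      have h4 : FA.card ≤ F.card := Finset.card_le_card hFAsub
      omega
    -- diagonal structure on the two sides
    have hdA : ∀ q ∈ FA', DiagOn VA q := by
      rintro ⟨k, l⟩ hq
      have hqFA : (k, l) ∈ FA := Finset.mem_of_mem_erase hq
      have hqne : (k, l) ≠ (i, j) := Finset.ne_of_mem_erase hq
      have hqF : (k, l) ∈ F := hFAsub hqFA
      have hbox : i ≤ k ∧ l ≤ j := by
        have := (Finset.mem_filter.mp hqFA).2
        simpa using this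
      obtain ⟨hkV, hlV, hkl, ⟨w', hw'V, hw'1, hw'2⟩, -⟩ := hd (k, l) hqF
      simp only at hkl ⊢
      have hkVA : k ∈ VA := by
        simp only [hVA, mem_filter]; exact ⟨hkV, hbox.1, by omega⟩
      have hlVA : l ∈ VA := by
        simp only [hVA, mem_filter]; exact ⟨hlV, by omega, hbox.2⟩
      refine ⟨hkVA, hlVA, hkl, ⟨w', ?_, hw'1, hw'2⟩, ?_⟩
      · simp only [hVA, mem_filter]
        exact ⟨hw'V, by omega, by omega⟩
      · -- exterior witness inside VA : i or j
        have : k ≠ i ∨ l ≠ j := by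
          by_contra hc; push_neg at hc; exact hqne (by rw [hc.1, hc.2])
        rcases this with h | h
        · exact ⟨i, hiVA, by omega⟩
        · exact ⟨j, hjVA, by omega⟩
    have hdB : ∀ q ∈ FB, DiagOn VB q := by
      rintro ⟨k, l⟩ hq
      have hqF : (k, l) ∈ F := (Finset.mem_sdiff.mp hq).1
      obtain ⟨hk, hl⟩ := hBkey (k, l) hq
      obtain ⟨hkV, hlV, hkl, ⟨w', hw'V, hw'1, hw'2⟩, ⟨z', hz'V, hz'⟩⟩ := hd (k, l) hqF
      simp only at hk hl hkl ⊢
      have hkVB : k ∈ VB := by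
        simp only [hVB, hI, mem_sdiff, mem_filter]; exact ⟨hkV, by omega⟩
      have hlVB : l ∈ VB := by
        simp only [hVB, hI, mem_sdiff, mem_filter]; exact ⟨hlV, by omega⟩
      refine ⟨hkVB, hlVB, hkl, ?_, ?_⟩
      · by_cases hcase : k ≤ i ∧ j ≤ l
        · rcases lt_or_eq_of_le hcase.1 with hki | hki
          · exact ⟨i, hiVB, by omega⟩
          · have hjl : j < l := by
              rcases lt_or_eq_of_le hcase.2 with h | h
              · exact h
              · exfalso
                have : (k, l) = (i, j) := by rw [hki, h]
                have := (Finset.mem_sdiff.mp hq).2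
                rw [‹(k, l) = (i, j)›] at this
                exact this hijFA
            exact ⟨j, hjVB, by omega⟩
        · refine ⟨w', ?_, hw'1, hw'2⟩
          simp only [hVB, hI, mem_sdiff, mem_filter]
          exact ⟨hw'V, by omega⟩
      · by_cases hcase : k ≤ i ∧ j ≤ l
        · refine ⟨z', ?_, hz'⟩
          simp only [hVB, hI, mem_sdiff, mem_filter]
          exact ⟨hz'V, by omega⟩
        · by_cases hli : l ≤ i
          · exact ⟨j, hjVB, by omega⟩
          · exact ⟨i, hiVB, by omega⟩
    -- one of the two sides is deficient
    have hsplit : FA'.card + 3 < VA.card ∨ FB.card + 3 < VB.card := by omega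
    rcases hsplit with hdef | hdef
    · -- recurse into side A
      have hIH := ih FA' (by
          refine Finset.ssubset_iff_of_subset (Finset.Subset.trans (Finset.erase_subset _ _) hFAsub) |>.mpr ?_
          exact ⟨(i, j), hpF, by simp [hFA']⟩)
        VA hdA (fun p hp q hq => hnc p (hFAsub (Finset.mem_of_mem_erase hp))
          q (hFAsub (Finset.mem_of_mem_erase hq))) hdef
      obtain ⟨a, b, c, d, haV, hbV, hcV, hdV, hab, hbc, hcd, hacF, hbdF, hacI, hbdI⟩ := hIH
      have haVA := (Finset.mem_filter.mp haV).2
      have hbVA := (Finset.mem_filter.mp hbV).2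
      have hcVA := (Finset.mem_filter.mp hcV).2
      have hdVA := (Finset.mem_filter.mp hdV).2
      refine ⟨a, b, c, d, Finset.filter_subset _ _ haV, Finset.filter_subset _ _ hbV,
        Finset.filter_subset _ _ hcV, Finset.filter_subset _ _ hdV, hab, hbc, hcd,
        ?_, ?_, ?_, ?_⟩
      · -- (a,c) ∉ F
        intro hc
        apply hacF
        simp only [hFA', Finset.mem_erase]
        constructor
        · intro he
          injection he with h1 h2
          omega
        · simp only [hFA, mem_filter]
          exact ⟨hc, by omega, by omega⟩
      · intro hc
        apply hbdF
        simp only [hFA', Finset.mem_erase]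
        constructor
        · intro he
          injection he with h1 h2
          omega
        · simp only [hFA, mem_filter]
          exact ⟨hc, by omega, by omega⟩
      · -- compatibility of (a,c)
        rintro ⟨k, l⟩ hpF'
        by_cases hcase : (k, l) ∈ FA
        · by_cases hij' : (k, l) = (i, j)
          · rw [hij']
            unfold Ilv
            simp only
            omega
          · exact hacI (k, l) (by simp [hFA', Finset.mem_erase, hij', hcase])
        · have hqFB : (k, l) ∈ FB := by simp [hFB, Finset.mem_sdiff, hpF', hcase]
          obtain ⟨hk, hl⟩ := hBkey (k, l) hqFB
          simp only at hk hl
          unfold Ilv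
          simp only
          omega
      · rintro ⟨k, l⟩ hpF'
        by_cases hcase : (k, l) ∈ FA
        · by_cases hij' : (k, l) = (i, j)
          · rw [hij']
            unfold Ilv
            simp only
            omega
          · exact hbdI (k, l) (by simp [hFA', Finset.mem_erase, hij', hcase])
        · have hqFB : (k, l) ∈ FB := by simp [hFB, Finset.mem_sdiff, hpF', hcase]
          obtain ⟨hk, hl⟩ := hBkey (k, l) hqFB
          simp only at hk hl
          unfold Ilv
          simp only
          omega
    · -- recurse into side B
      have hIH := ih FB (by
          refine Finset.ssubset_iff_of_subset (Finset.sdiff_subset) |>.mpr ?_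
          exact ⟨(i, j), hpF, by simp [hFB, hijFA]⟩)
        VB hdB (fun p hp q hq => hnc p (Finset.mem_sdiff.mp hp).1
          q (Finset.mem_sdiff.mp hq).1) hdef
      obtain ⟨a, b, c, d, haV, hbV, hcV, hdV, hab, hbc, hcd, hacF, hbdF, hacI, hbdI⟩ := hIH
      have haVB : ¬ (i < a ∧ a < j) := by
        have := (Finset.mem_sdiff.mp haV).2; simp only [hI, mem_filter] at this
        intro hc; exact this ⟨(Finset.mem_sdiff.mp haV).1, hc.1, hc.2⟩
      have hbVB : ¬ (i < b ∧ b < j) := by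
        have := (Finset.mem_sdiff.mp hbV).2; simp only [hI, mem_filter] at this
        intro hc; exact this ⟨(Finset.mem_sdiff.mp hbV).1, hc.1, hc.2⟩
      have hcVB : ¬ (i < c ∧ c < j) := by
        have := (Finset.mem_sdiff.mp hcV).2; simp only [hI, mem_filter] at this
        intro hc; exact this ⟨(Finset.mem_sdiff.mp hcV).1, hc.1, hc.2⟩
      have hdVB : ¬ (i < d ∧ d < j) := by
        have := (Finset.mem_sdiff.mp hdV).2; simp only [hI, mem_filter] at this
        intro hc; exact this ⟨(Finset.mem_sdiff.mp hdV).1, hc.1, hc.2⟩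
      refine ⟨a, b, c, d, (Finset.mem_sdiff.mp haV).1, (Finset.mem_sdiff.mp hbV).1,
        (Finset.mem_sdiff.mp hcV).1, (Finset.mem_sdiff.mp hdV).1, hab, hbc, hcd,
        ?_, ?_, ?_, ?_⟩
      · intro hc
        by_cases hcase : (a, c) ∈ FA
        · have := (Finset.mem_filter.mp hcase).2
          simp only at this
          omega
        · exact hacF (by simp [hFB, Finset.mem_sdiff, hc, hcase])
      · intro hc
        by_cases hcase : (b, d) ∈ FA
        · have := (Finset.mem_filter.mp hcase).2
          simp only at this
          omega
        · exact hbdF (by simp [hFB, Finset.mem_sdiff, hc, hcase])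
      · rintro ⟨k, l⟩ hpF'
        by_cases hcase : (k, l) ∈ FA
        · have hbox := (Finset.mem_filter.mp hcase).2
          simp only at hbox
          unfold Ilv
          simp only
          omega
        · exact hacI (k, l) (by simp [hFB, Finset.mem_sdiff, hpF', hcase])
      · rintro ⟨k, l⟩ hpF'
        by_cases hcase : (k, l) ∈ FA
        · have hbox := (Finset.mem_filter.mp hcase).2
          simp only at hbox
          unfold Ilv
          simp only
          omega
        · exact hbdI (k, l) (by simp [hFB, Finset.mem_sdiff, hpF', hcase])

lemma exists_ccw_enum (S : Finset Pt) (hgp : GenPos S) (hn : 3 ≤ S.card)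
    (hconv : ∀ p ∈ S, p ∉ convexHull ℝ ((S : Set Pt) \ {p})) :
    ∃ L : List Pt, L.Nodup ∧ L.length = S.card ∧ (∀ p, p ∈ L ↔ p ∈ S) ∧
      ∀ i j k : ℕ, ∀ hi : i < L.length, ∀ hj : j < L.length, ∀ hk : k < L.length,
        i < j → j < k → 0 < orient (L[i]'hi) (L[j]'hj) (L[k]'hk) := by
  classical
  have hSne : S.Nonempty := Finset.card_pos.mp (by omega)
  -- lexicographically smallest point
  set x₀ := (S.image Prod.fst).min' (hSne.image _) with hx₀
  have hx₀mem : ∃ p ∈ S, p.1 = x₀ := by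
    have := Finset.min'_mem (S.image Prod.fst) (hSne.image _)
    rw [Finset.mem_image] at this
    obtain ⟨p, hp, hpx⟩ := this
    exact ⟨p, hp, hpx⟩
  have hx₀le : ∀ q ∈ S, x₀ ≤ q.1 := fun q hq =>
    Finset.min'_le _ _ (Finset.mem_image_of_mem _ hq)
  set S₀ := S.filter (fun p => p.1 = x₀) with hS₀
  have hS₀ne : S₀.Nonempty := by
    obtain ⟨p, hp, hpx⟩ := hx₀mem
    exact ⟨p, by simp [hS₀, hp, hpx]⟩
  set y₀ := (S₀.image Prod.snd).min' (hS₀ne.image _) with hy₀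
  have hp₀S : ((x₀, y₀) : Pt) ∈ S := by
    have := Finset.min'_mem (S₀.image Prod.snd) (hS₀ne.image _)
    rw [Finset.mem_image] at this
    obtain ⟨p, hp, hpy⟩ := this
    simp only [hS₀, Finset.mem_filter] at hp
    have : p = (x₀, y₀) := Prod.ext hp.2 hpy
    rw [← this]; exact hp.1
  set p₀ : Pt := (x₀, y₀) with hp₀
  have hy₀le : ∀ q ∈ S, q.1 = x₀ → y₀ ≤ q.2 := by
    intro q hq hqx
    apply Finset.min'_le
    exact Finset.mem_image_of_mem _ (by simp [hS₀, hq, hqx])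
  -- the slope key
  set key : Pt → WithTop ℝ :=
    fun q => if q.1 = x₀ then ⊤ else ((q.2 - y₀) / (q.1 - x₀) : ℝ) with hkey
  have horient0 : ∀ p ∈ S, ∀ q ∈ S, ∀ r ∈ S, p ≠ q → p ≠ r → q ≠ r →
      orient p q r ≠ 0 := by
    intro p hp q hq r hr hpq hpr hqr h0
    exact hgp p hp q hq r hr hpq hpr hqr (collinear_of_orient_eq_zero hpq h0)
  -- B1 : the key orders points counterclockwise around p₀
  have hB1 : ∀ q ∈ S, q ≠ p₀ → ∀ r ∈ S, r ≠ p₀ → key q < key r →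
      0 < orient p₀ q r := by
    intro q hq hqne r hr hrne hlt
    have hq1 : q.1 ≠ x₀ := by
      intro hc
      rw [hkey] at hlt
      simp only [hc, if_pos] at hlt
      exact (not_top_lt hlt)
    have hq1' : x₀ < q.1 := lt_of_le_of_ne (hx₀le q hq) (Ne.symm hq1)
    have hor : orient p₀ q r
        = (q.1 - x₀) * (r.2 - y₀) - (q.2 - y₀) * (r.1 - x₀) := by
      unfold orient; rw [hp₀]
    by_cases hr1 : r.1 = x₀
    · have hr2 : y₀ < r.2 := by
        have h1 := hy₀le r hr hr1
        rcases lt_or_eq_of_le h1 with h | h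
        · exact h
        · exfalso; exact hrne (Prod.ext hr1 h.symm)
      rw [hor, hr1]
      have : r.2 - y₀ > 0 := by linarith
      nlinarith
    · have hr1' : x₀ < r.1 := lt_of_le_of_ne (hx₀le r hr) (Ne.symm hr1)
      rw [hkey] at hlt
      simp only [if_neg hq1, if_neg hr1] at hlt
      have hslope : (q.2 - y₀) / (q.1 - x₀) < (r.2 - y₀) / (r.1 - x₀) :=
        WithTop.coe_lt_coe.mp hlt
      rw [div_lt_div_iff₀ (by linarith) (by linarith)] at hslope
      rw [hor]
      nlinarith
  -- key is injective on S \ {p₀}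
  have hkeyinj : ∀ q ∈ S, q ≠ p₀ → ∀ r ∈ S, r ≠ p₀ → q ≠ r → key q ≠ key r := by
    intro q hq hqne r hr hrne hqr heq
    apply horient0 p₀ hp₀S q hq r hr (Ne.symm hqne) (Ne.symm hrne) hqr
    have hor : orient p₀ q r
        = (q.1 - x₀) * (r.2 - y₀) - (q.2 - y₀) * (r.1 - x₀) := by
      unfold orient; rw [hp₀]
    by_cases hq1 : q.1 = x₀
    · by_cases hr1 : r.1 = x₀
      · rw [hor, hq1, hr1]; ring
      · exfalso
        rw [hkey] at heq
        simp only [if_pos hq1, if_neg hr1] at heq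
        exact (WithTop.coe_ne_top heq.symm)
    · by_cases hr1 : r.1 = x₀
      · exfalso
        rw [hkey] at heq
        simp only [if_neg hq1, if_pos hr1] at heq
        exact (WithTop.coe_ne_top heq)
      · rw [hkey] at heq
        simp only [if_neg hq1, if_neg hr1] at heq
        have hslope : (q.2 - y₀) / (q.1 - x₀) = (r.2 - y₀) / (r.1 - x₀) :=
          WithTop.coe_injective heq
        have hq1' : x₀ < q.1 := lt_of_le_of_ne (hx₀le q hq) (Ne.symm hq1)
        have hr1' : x₀ < r.1 := lt_of_le_of_ne (hx₀le r hr) (Ne.symm hr1)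
        rw [div_eq_div_iff (by linarith) (by linarith)] at hslope
        rw [hor]; linarith
  -- sort the remaining points by key
  set M := (S.erase p₀).toList.mergeSort (fun a b => decide (key a ≤ key b)) with hM
  have hperm : M.Perm (S.erase p₀).toList := List.mergeSort_perm _ _
  have hMmem : ∀ p, p ∈ M ↔ (p ∈ S ∧ p ≠ p₀) := by
    intro p
    rw [hperm.mem_iff, Finset.mem_toList, Finset.mem_erase]
    tauto
  have hMnodup : M.Nodup := hperm.nodup_iff.mpr (Finset.nodup_toList _)
  have hMsorted : M.Pairwise (fun a b => key a ≤ key b) := by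
    have := List.pairwise_mergeSort (le := fun a b => decide (key a ≤ key b))
      (fun a b c hab hbc => by
        simp only [decide_eq_true_eq] at *
        exact le_trans hab hbc)
      (fun a b => by
        simp only [Bool.or_eq_true, decide_eq_true_eq]
        exact le_total (key a) (key b))
      (S.erase p₀).toList
    rw [← hM] at this
    exact this.imp (fun h => by simpa using h)
  -- strict monotonicity of key along M
  have hMstrict : ∀ a b : ℕ, ∀ ha : a < M.length, ∀ hb : b < M.length, a < b →
      key (M[a]'ha) < key (M[b]'hb) := by
    intro a b ha hb hab
    have hle : key (M[a]'ha) ≤ key (M[b]'hb) := by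
      rw [List.pairwise_iff_getElem] at hMsorted
      exact hMsorted a b ha hb hab
    have hne' : (M[a]'ha) ≠ (M[b]'hb) := by
      intro hc
      rw [List.Nodup, List.pairwise_iff_getElem] at hMnodup
      exact hMnodup a b ha hb hab hc
    have hma := (hMmem (M[a]'ha)).mp (List.getElem_mem _)
    have hmb := (hMmem (M[b]'hb)).mp (List.getElem_mem _)
    exact lt_of_le_of_ne hle (hkeyinj _ hma.1 hma.2 _ hmb.1 hmb.2 hne')
  -- the triples of M are counterclockwise
  have hMccw : ∀ a b c : ℕ, ∀ ha : a < M.length, ∀ hb : b < M.length,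
      ∀ hc : c < M.length, a < b → b < c →
      0 < orient (M[a]'ha) (M[b]'hb) (M[c]'hc) := by
    intro a b c ha hb hc hab hbc
    set q := M[a]'ha with hq
    set r := M[b]'hb with hr
    set s := M[c]'hc with hs
    have hmq := (hMmem q).mp (List.getElem_mem _)
    have hmr := (hMmem r).mp (List.getElem_mem _)
    have hms := (hMmem s).mp (List.getElem_mem _)
    have hqr : q ≠ r := by
      intro hcon
      rw [List.Nodup, List.pairwise_iff_getElem] at hMnodup
      exact hMnodup a b ha hb hab hcon
    have hqs : q ≠ s := by
      intro hcon
      rw [List.Nodup, List.pairwise_iff_getElem] at hMnodup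
      exact hMnodup a c ha hc (by omega) hcon
    have hrs : r ≠ s := by
      intro hcon
      rw [List.Nodup, List.pairwise_iff_getElem] at hMnodup
      exact hMnodup b c hb hc hbc hcon
    by_contra hcon
    push_neg at hcon
    have hne0 : orient q r s ≠ 0 := horient0 q hmq.1 r hmr.1 s hms.1 hqr hqs hrs
    have hneg : orient q r s < 0 := lt_of_le_of_ne hcon hne0
    -- r is inside the triangle p₀ q s
    have hA : 0 < orient p₀ q s :=
      hB1 q hmq.1 hmq.2 s hms.1 hms.2 (hMstrict a c ha hc (by omega))
    have h1 : 0 ≤ orient p₀ q r :=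
      le_of_lt (hB1 q hmq.1 hmq.2 r hmr.1 hmr.2 (hMstrict a b ha hb hab))
    have h2 : 0 ≤ orient q s r := by
      have : orient q s r = - orient q r s := by unfold orient; ring
      rw [this]; linarith
    have h3 : 0 ≤ orient s p₀ r := by
      have hcyc : orient s p₀ r = orient p₀ r s := by unfold orient; ring
      rw [hcyc]
      exact le_of_lt (hB1 r hmr.1 hmr.2 s hms.1 hms.2 (hMstrict b c hb hc hbc))
    have hmem := mem_triangle_of_orient hA h1 h2 h3
    have hsub : ({p₀, q, s} : Set Pt) ⊆ (S : Set Pt) \ {r} := by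
      intro x hx
      rcases hx with rfl | rfl | rfl
      · exact ⟨hp₀S, fun hc => hmr.2 (by rw [← Set.mem_singleton_iff.mp hc])⟩
      · exact ⟨hmq.1, fun hc => hqr (Set.mem_singleton_iff.mp hc)⟩
      · exact ⟨hms.1, fun hc => hrs (Set.mem_singleton_iff.mp hc).symm⟩
    exact hconv r hmr.1 (convexHull_mono hsub hmem)
  -- assemble the full list
  refine ⟨p₀ :: M, ?_, ?_, ?_, ?_⟩
  · rw [List.nodup_cons]
    refine ⟨fun hc => ?_, hMnodup⟩
    exact ((hMmem p₀).mp hc).2 rfl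
  · have : M.length = (S.erase p₀).toList.length := hperm.length_eq
    rw [List.length_cons, this, Finset.length_toList, Finset.card_erase_of_mem hp₀S]
    omega
  · intro p
    rw [List.mem_cons, hMmem]
    constructor
    · rintro (rfl | h)
      · exact hp₀S
      · exact h.1
    · intro hp
      by_cases hpp : p = p₀
      · exact Or.inl hpp
      · exact Or.inr ⟨hp, hpp⟩
  · intro i j k hi hj hk hij hjk
    match i, j, k with
    | 0, j + 1, k + 1 =>
      simp only [List.getElem_cons_zero, List.getElem_cons_succ]
      have hj' : j < M.length := by simpa using hj
      have hk' : k < M.length := by simpa using hk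
      have hmq := (hMmem (M[j]'hj')).mp (List.getElem_mem _)
      have hms := (hMmem (M[k]'hk')).mp (List.getElem_mem _)
      exact hB1 _ hmq.1 hmq.2 _ hms.1 hms.2 (hMstrict j k hj' hk' (by omega))
    | i + 1, j + 1, k + 1 =>
      simp only [List.getElem_cons_succ]
      exact hMccw i j k (by simpa using hi) (by simpa using hj) (by simpa using hk)
        (by omega) (by omega)

section Bridge
variable {L : List Pt} (hnd : L.Nodup)
  (hcert : ∀ i j k : ℕ, ∀ hi : i < L.length, ∀ hj : j < L.length, ∀ hk : k < L.length,
    i < j → j < k → 0 < orient (L[i]'hi) (L[j]'hj) (L[k]'hk))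

include hnd hcert in
lemma segs_cross_of_ilv : ∀ a b c d : ℕ, ∀ ha : a < L.length, ∀ hb : b < L.length,
    ∀ hc : c < L.length, ∀ hd : d < L.length, a < b → b < c → c < d →
    (openSegment ℝ (L[a]'ha) (L[c]'hc) ∩ openSegment ℝ (L[b]'hb) (L[d]'hd)).Nonempty := by
  intro a b c d ha hb hc hd hab hbc hcd
  have hne : L[a]'ha ≠ L[c]'hc := by
    intro hcon
    rw [List.Nodup, List.pairwise_iff_getElem] at hnd
    exact hnd a c ha hc (by omega) hcon
  apply seg_cross hne
  · have h := hcert a b c ha hb hc hab hbc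
    have e : orient (L[a]'ha) (L[c]'hc) (L[b]'hb)
        = - orient (L[a]'ha) (L[b]'hb) (L[c]'hc) := by unfold orient; ring
    rw [e]; linarith
  · exact hcert a c d ha hc hd (by omega) hcd
  · have h := hcert a b d ha hb hd hab (by omega)
    have e : orient (L[b]'hb) (L[d]'hd) (L[a]'ha)
        = orient (L[a]'ha) (L[b]'hb) (L[d]'hd) := by unfold orient; ring
    rw [e]; linarith
  · have h := hcert b c d hb hc hd hbc hcd
    have e : orient (L[b]'hb) (L[d]'hd) (L[c]'hc)
        = - orient (L[b]'hb) (L[c]'hc) (L[d]'hd) := by unfold orient; ring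
    rw [e]; linarith

include hcert in
lemma segs_disjoint_of_not_ilv : ∀ i j k l : ℕ, ∀ hi : i < L.length, ∀ hj : j < L.length,
    ∀ hk : k < L.length, ∀ hl : l < L.length, i < j → k < l →
    ¬ (i = k ∧ j = l) → ¬ Ilv (i, j) (k, l) →
    openSegment ℝ (L[i]'hi) (L[j]'hj) ∩ openSegment ℝ (L[k]'hk) (L[l]'hl) = ∅ := by
  intro i j k l hi hj hk hl hij hkl hne hni
  have hni' : ¬ ((i < k ∧ k < j ∧ j < l) ∨ (k < i ∧ i < l ∧ l < j)) := by
    intro hcon; exact hni (by unfold Ilv; simpa using hcon)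
  have hcases : (i = k ∧ j < l) ∨ (i = k ∧ l < j) ∨ (j = l ∧ i < k) ∨ (j = l ∧ k < i) ∨
      (i = l) ∨ (j = k) ∨ (j < k) ∨ (l < i) ∨ (i < k ∧ l < j) ∨ (k < i ∧ j < l) := by
    omega
  rcases hcases with ⟨h1, h2⟩ | ⟨h1, h2⟩ | ⟨h1, h2⟩ | ⟨h1, h2⟩ | h1 | h1 | h1 | h1 |
    ⟨h1, h2⟩ | ⟨h1, h2⟩
  · -- i = k, j < l
    subst h1
    exact seg_disjoint_of_shared' (hcert i j l hi hj hl hij h2).ne'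
  · -- i = k, l < j
    subst h1
    apply seg_disjoint_of_shared'
    have h := hcert i l j hi hl hj hkl h2
    have e : orient (L[i]'hi) (L[j]'hj) (L[l]'hl)
        = - orient (L[i]'hi) (L[l]'hl) (L[j]'hj) := by unfold orient; ring
    rw [e]; exact neg_ne_zero.mpr h.ne'
  · -- j = l, i < k
    subst h1
    rw [openSegment_symm ℝ (L[i]'hi) (L[j]'hj), openSegment_symm ℝ (L[k]'hk) (L[j]'hj)]
    apply seg_disjoint_of_shared'
    have h := hcert i k j hi hk hj h2 hkl
    have e : orient (L[j]'hj) (L[i]'hi) (L[k]'hk)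
        = orient (L[i]'hi) (L[k]'hk) (L[j]'hj) := by unfold orient; ring
    rw [e]; exact h.ne'
  · -- j = l, k < i
    subst h1
    rw [openSegment_symm ℝ (L[i]'hi) (L[j]'hj), openSegment_symm ℝ (L[k]'hk) (L[j]'hj)]
    apply seg_disjoint_of_shared'
    have h := hcert k i j hk hi hj h2 hij
    have e : orient (L[j]'hj) (L[i]'hi) (L[k]'hk)
        = - orient (L[k]'hk) (L[i]'hi) (L[j]'hj) := by unfold orient; ring
    rw [e]; exact neg_ne_zero.mpr h.ne'
  · -- i = l
    subst h1
    rw [openSegment_symm ℝ (L[k]'hk) (L[i]'hi)]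
    apply seg_disjoint_of_shared'
    have h := hcert k i j hk hi hj hkl hij
    have e : orient (L[i]'hi) (L[j]'hj) (L[k]'hk)
        = orient (L[k]'hk) (L[i]'hi) (L[j]'hj) := by unfold orient; ring
    rw [e]; exact h.ne'
  · -- j = k
    subst h1
    rw [openSegment_symm ℝ (L[i]'hi) (L[j]'hj)]
    apply seg_disjoint_of_shared'
    have h := hcert i j l hi hj hl hij hkl
    have e : orient (L[j]'hj) (L[i]'hi) (L[l]'hl)
        = - orient (L[i]'hi) (L[j]'hj) (L[l]'hl) := by unfold orient; ring
    rw [e]; exact neg_ne_zero.mpr h.ne'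
  · -- j < k : disjoint, (i,j) to the left
    have e : orient (L[k]'hk) (L[l]'hl) (L[i]'hi)
        = orient (L[i]'hi) (L[k]'hk) (L[l]'hl) := by unfold orient; ring
    have e2 : orient (L[k]'hk) (L[l]'hl) (L[j]'hj)
        = orient (L[j]'hj) (L[k]'hk) (L[l]'hl) := by unfold orient; ring
    exact seg_disjoint_of_same_side
      (by rw [e]; exact hcert i k l hi hk hl (by omega) hkl)
      (by rw [e2]; exact hcert j k l hj hk hl h1 hkl)
  · -- l < i
    rw [Set.inter_comm]
    have e : orient (L[i]'hi) (L[j]'hj) (L[k]'hk)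
        = orient (L[k]'hk) (L[i]'hi) (L[j]'hj) := by unfold orient; ring
    have e2 : orient (L[i]'hi) (L[j]'hj) (L[l]'hl)
        = orient (L[l]'hl) (L[i]'hi) (L[j]'hj) := by unfold orient; ring
    exact seg_disjoint_of_same_side
      (by rw [e]; exact hcert k i j hk hi hj (by omega) hij)
      (by rw [e2]; exact hcert l i j hl hi hj h1 hij)
  · -- i < k < l < j : (k,l) nested inside (i,j)
    have e : orient (L[k]'hk) (L[l]'hl) (L[i]'hi)
        = orient (L[i]'hi) (L[k]'hk) (L[l]'hl) := by unfold orient; ring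
    exact seg_disjoint_of_same_side
      (by rw [e]; exact hcert i k l hi hk hl h1 hkl)
      (hcert k l j hk hl hj hkl h2)
  · -- k < i < j < l : (i,j) nested inside (k,l)
    rw [Set.inter_comm]
    have e : orient (L[i]'hi) (L[j]'hj) (L[k]'hk)
        = orient (L[k]'hk) (L[i]'hi) (L[j]'hj) := by unfold orient; ring
    exact seg_disjoint_of_same_side
      (by rw [e]; exact hcert k i j hk hi hj h1 hij)
      (hcert i j l hi hj hl hij h2)
end Bridge

/-- Index of a point in the enumeration `L`. -/
noncomputable def pidx (L : List Pt) (p : Pt) : ℕ :=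
  @dite _ (∃ i : ℕ, ∃ _ : i < L.length, L[i] = p) (Classical.propDecidable _)
    (fun h => h.choose) (fun _ => 0)

lemma pidx_spec {L : List Pt} {p : Pt} (hp : p ∈ L) :
    ∃ h : pidx L p < L.length, L[pidx L p]'h = p := by
  rw [List.mem_iff_getElem] at hp
  unfold pidx
  rw [dif_pos hp]
  exact hp.choose_spec

lemma pidx_getElem {L : List Pt} (hnd : L.Nodup) (i : ℕ) (hi : i < L.length) :
    pidx L (L[i]'hi) = i := by
  obtain ⟨h, hh⟩ := pidx_spec (List.getElem_mem hi)
  by_contra hne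
  rw [List.Nodup, List.pairwise_iff_getElem] at hnd
  rcases Nat.lt_or_ge (pidx L (L[i]'hi)) i with hlt | hge
  · exact hnd _ _ h hi hlt hh
  · exact hnd i _ hi h (by omega) hh.symm

/-- The index pair of an edge, relative to the enumeration `L`. -/
noncomputable def phi (L : List Pt) : Sym2 Pt → ℕ × ℕ :=
  Sym2.lift ⟨fun p q => (min (pidx L p) (pidx L q), max (pidx L p) (pidx L q)),
    fun a b => by simp [min_comm, max_comm]⟩

lemma phi_val {L : List Pt} (hnd : L.Nodup) {i j : ℕ} (hi : i < L.length)
    (hj : j < L.length) (hij : i < j) : phi L s(L[i]'hi, L[j]'hj) = (i, j) := by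
  unfold phi
  rw [Sym2.lift_mk]
  simp only [pidx_getElem hnd i hi, pidx_getElem hnd j hj]
  rw [min_eq_left (le_of_lt hij), max_eq_right (le_of_lt hij)]

lemma edge_rep {L : List Pt} (hnd : L.Nodup) (e : Sym2 Pt)
    (hd : ¬ e.IsDiag) (hs : ∀ p ∈ e, p ∈ L) :
    ∃ i j : ℕ, ∃ hi : i < L.length, ∃ hj : j < L.length, i < j ∧
      e = s(L[i]'hi, L[j]'hj) ∧ phi L e = (i, j) := by
  revert hd hs
  induction e using Sym2.ind with
  | _ p q =>
    intro hd hs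
    have hpq : p ≠ q := by simpa [Sym2.mk_isDiag_iff] using hd
    have hp : p ∈ L := hs p (by simp)
    have hq : q ∈ L := hs q (by simp)
    obtain ⟨hip, hgp⟩ := pidx_spec hp
    obtain ⟨hiq, hgq⟩ := pidx_spec hq
    have hne : pidx L p ≠ pidx L q := by
      intro hc
      apply hpq
      rw [← hgp, ← hgq]
      congr 1
    rcases lt_or_gt_of_ne hne with h | h
    · refine ⟨pidx L p, pidx L q, hip, hiq, h, ?_, ?_⟩
      · rw [hgp, hgq]
      · unfold phi
        rw [Sym2.lift_mk]
        simp only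
        rw [min_eq_left (le_of_lt h), max_eq_right (le_of_lt h)]
    · refine ⟨pidx L q, pidx L p, hiq, hip, h, ?_, ?_⟩
      · rw [hgp, hgq, Sym2.eq_swap]
      · unfold phi
        rw [Sym2.lift_mk]
        simp only
        rw [min_eq_right (le_of_lt h), max_eq_left (le_of_lt h)]

/-- For points in convex position, every maximal biplane graph has exactly
`3n − 6` edges. -/
theorem maximal_biplane_convex_position_card
    (S : Finset Pt) (E : Finset (Sym2 Pt))
    (hgp : GenPos S) (hn : 3 ≤ S.card)
    (hconv : ∀ p ∈ S, p ∉ convexHull ℝ ((S : Set Pt) \ {p}))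
    (hmax : MaxBiplane S E) :
    (E.card : ℤ) = 3 * (S.card : ℤ) - 6 := by
  classical
  obtain ⟨hE, ⟨E₁, E₂, hEU, hdisj, hP₁, hP₂⟩, hmaxl⟩ := hmax
  obtain ⟨L, hnd, hlen, hLS, hcert⟩ := exists_ccw_enum S hgp hn hconv
  set n := L.length with hn'
  have hn3 : 3 ≤ n := by rw [hlen]; exact hn
  have hsub₁ : E₁ ⊆ E := by rw [hEU]; exact Finset.subset_union_left
  have hsub₂ : E₂ ⊆ E := by rw [hEU]; exact Finset.subset_union_right
  have hseg : ∀ a b : Pt, segOf s(a, b) = openSegment ℝ a b := fun a b => rfl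
  have hElt : ∀ i : ℕ, ∀ hi : i < n, (L[i]'hi) ∈ S :=
    fun i hi => (hLS _).mp (List.getElem_mem hi)
  have hgetne : ∀ i j : ℕ, ∀ hi : i < n, ∀ hj : j < n, i ≠ j →
      (L[i]'hi) ≠ (L[j]'hj) := by
    intro i j hi hj hne hc
    have := pidx_getElem hnd i hi
    rw [hc, pidx_getElem hnd j hj] at this
    exact hne this.symm
  have hrepE : ∀ e ∈ E, ∃ i j : ℕ, ∃ hi : i < n, ∃ hj : j < n, i < j ∧
      e = s(L[i]'hi, L[j]'hj) ∧ phi L e = (i, j) :=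
    fun e he => edge_rep hnd e (hE e he).1 (fun p hp => (hLS p).mpr ((hE e he).2 p hp))
  have hφinj : ∀ e ∈ E, ∀ f ∈ E, phi L e = phi L f → e = f := by
    intro e he f hf hφ
    obtain ⟨i, j, hi, hj, hij, heq, heφ⟩ := hrepE e he
    obtain ⟨k, l, hk, hl, hkl, hfeq, hfφ⟩ := hrepE f hf
    rw [heφ, hfφ] at hφ
    injection hφ with h1 h2
    subst h1; subst h2
    rw [heq, hfeq]
  -- the insertion principle : a chord compatible with one plane layer is in E
  have hIns : ∀ A B : Finset (Sym2 Pt), E = A ∪ B → Disjoint A B →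
      PlaneEdges A → PlaneEdges B →
      ∀ i j : ℕ, ∀ hi : i < n, ∀ hj : j < n, i < j →
      (∀ f ∈ A, ¬ Ilv (i, j) (phi L f)) → s(L[i]'hi, L[j]'hj) ∈ E := by
    intro A B hU hdj hPA hPB i j hi hj hij hcompat
    by_contra he
    have hsubA : A ⊆ E := by rw [hU]; exact Finset.subset_union_left
    refine hmaxl s(L[i]'hi, L[j]'hj) ?_ ?_ he ?_
    · rw [Sym2.mk_isDiag_iff]
      exact hgetne i j hi hj (by omega)
    · intro p hp
      rcases Sym2.mem_iff.mp hp with rfl | rfl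
      · exact hElt i hi
      · exact hElt j hj
    refine ⟨insert s(L[i]'hi, L[j]'hj) A, B, ?_, ?_, ?_, hPB⟩
    · rw [hU, Finset.insert_union]
    · rw [Finset.disjoint_insert_left]
      exact ⟨fun hc => he (by rw [hU]; exact Finset.mem_union_right _ hc), hdj⟩
    · intro a ha b hb hab
      have hmain : ∀ g ∈ A, segOf s(L[i]'hi, L[j]'hj) ∩ segOf g = ∅ := by
        intro g hg
        obtain ⟨k, l, hk, hl, hkl, hgeq, hgφ⟩ := hrepE g (hsubA hg)
        rw [hgeq, hseg, hseg]
        apply segs_disjoint_of_not_ilv hcert i j k l hi hj hk hl hij hkl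
        · rintro ⟨rfl, rfl⟩
          exact he (hsubA (by rwa [← hgeq]))
        · have := hcompat g hg
          rwa [hgφ] at this
      rcases Finset.mem_insert.mp ha with rfl | haA
      · rcases Finset.mem_insert.mp hb with rfl | hbA
        · exact absurd rfl hab
        · exact hmain b hbA
      · rcases Finset.mem_insert.mp hb with rfl | hbA
        · rw [Set.inter_comm]; exact hmain a haA
        · exact hPA a haA b hbA hab
  -- hull pairs
  set Hull : Finset (ℕ × ℕ) :=
    ((Finset.range (n - 1)).image fun i => (i, i + 1)) ∪ {(0, n - 1)} with hHull
  have hHullchar : ∀ i j : ℕ, (i, j) ∈ Hull ↔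
      ((j = i + 1 ∧ i < n - 1) ∨ (i = 0 ∧ j = n - 1)) := by
    intro i j
    simp only [hHull, Finset.mem_union, Finset.mem_image, Finset.mem_range,
      Finset.mem_singleton, Prod.mk.injEq]
    constructor
    · rintro (⟨a, ha, h1, h2⟩ | ⟨h1, h2⟩)
      · exact Or.inl ⟨by omega, by omega⟩
      · exact Or.inr ⟨h1, h2⟩
    · rintro (⟨h1, h2⟩ | ⟨h1, h2⟩)
      · exact Or.inl ⟨i, by omega, rfl, by omega⟩
      · exact Or.inr ⟨h1, h2⟩
  have hHullCard : Hull.card = n := by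
    rw [hHull, Finset.card_union_of_disjoint, Finset.card_image_of_injective _
      (fun a b h => by injection h), Finset.card_range, Finset.card_singleton]
    · omega
    · rw [Finset.disjoint_right]
      intro p hp hq
      rw [Finset.mem_singleton] at hp
      subst hp
      rw [Finset.mem_image] at hq
      obtain ⟨a, ha, h⟩ := hq
      injection h with h1 h2
      omega
  have hHullNI : ∀ i j k l : ℕ, (i, j) ∈ Hull → k < l → l < n →
      ¬ Ilv (i, j) (k, l) ∧ ¬ Ilv (k, l) (i, j) := by
    intro i j k l hmem hkl hln
    have hc := (hHullchar i j).mp hmem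
    unfold Ilv
    simp only
    omega
  have hHullValid : ∀ i j : ℕ, (i, j) ∈ Hull → i < j ∧ j < n := by
    intro i j hmem
    have hc := (hHullchar i j).mp hmem
    omega
  have hHullNotDiag : ∀ i j : ℕ, (i, j) ∈ Hull → ¬ DiagOn (Finset.range n) (i, j) := by
    intro i j hmem hdiag
    obtain ⟨-, -, -, ⟨w, hw, hw2⟩, ⟨z, hz, hz2⟩⟩ := hdiag
    rw [Finset.mem_range] at hw hz
    have hc := (hHullchar i j).mp hmem
    simp only at hw2 hz2
    omega
  have hclassify : ∀ i j : ℕ, i < j → j < n →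
      (i, j) ∈ Hull ∨ DiagOn (Finset.range n) (i, j) := by
    intro i j hij hjn
    by_cases hH : (j = i + 1 ∧ i < n - 1) ∨ (i = 0 ∧ j = n - 1)
    · exact Or.inl ((hHullchar i j).mpr hH)
    · refine Or.inr ⟨Finset.mem_range.mpr (by omega), Finset.mem_range.mpr hjn, hij,
        ⟨i + 1, Finset.mem_range.mpr (by omega), by simp; omega⟩, ?_⟩
      by_cases h0 : 0 < i
      · exact ⟨0, Finset.mem_range.mpr (by omega), by simp; omega⟩
      · exact ⟨n - 1, Finset.mem_range.mpr (by omega), by simp; omega⟩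
  -- the chord sets of the two layers
  set dp : Sym2 Pt → Prop := fun e => DiagOn (Finset.range n) (phi L e) with hdp
  set D₁ : Finset (ℕ × ℕ) := (E₁.filter dp).image (phi L) with hD₁
  set D₂ : Finset (ℕ × ℕ) := (E₂.filter dp).image (phi L) with hD₂
  have hLayer : ∀ A : Finset (Sym2 Pt), A ⊆ E → PlaneEdges A →
      (∀ p ∈ (A.filter dp).image (phi L), DiagOn (Finset.range n) p) ∧
      (∀ p ∈ (A.filter dp).image (phi L), ∀ q ∈ (A.filter dp).image (phi L),
        p ≠ q → ¬ Ilv p q) ∧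
      ((A.filter dp).image (phi L)).card = (A.filter dp).card := by
    intro A hsubA hPA
    refine ⟨?_, ?_, ?_⟩
    · intro p hp
      rw [Finset.mem_image] at hp
      obtain ⟨e, he, rfl⟩ := hp
      exact (Finset.mem_filter.mp he).2
    · intro p hp q hq hne hilv
      rw [Finset.mem_image] at hp hq
      obtain ⟨e, he, rfl⟩ := hp
      obtain ⟨f, hf, rfl⟩ := hq
      have heE : e ∈ E := hsubA (Finset.mem_filter.mp he).1
      have hfE : f ∈ E := hsubA (Finset.mem_filter.mp hf).1
      have hef : e ≠ f := fun hc => hne (by rw [hc])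
      obtain ⟨i, j, hi, hj, hij, heq, heφ⟩ := hrepE e heE
      obtain ⟨k, l, hk, hl, hkl, hfeq, hfφ⟩ := hrepE f hfE
      have hdisj' := hPA e (Finset.mem_filter.mp he).1 f (Finset.mem_filter.mp hf).1 hef
      rw [heq, hfeq, hseg, hseg] at hdisj'
      rw [heφ, hfφ] at hilv
      unfold Ilv at hilv
      simp only at hilv
      rcases hilv with ⟨h1, h2, h3⟩ | ⟨h1, h2, h3⟩
      · have := segs_cross_of_ilv hnd hcert i k j l hi hk hj hl h1 h2 h3
        rw [hdisj'] at this
        exact Set.not_nonempty_empty this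
      · have := segs_cross_of_ilv hnd hcert k i l j hk hi hl hj h1 h2 h3
        rw [Set.inter_comm] at hdisj'
        rw [hdisj'] at this
        exact Set.not_nonempty_empty this
    · apply Finset.card_image_of_injOn
      intro e he f hf hφ
      exact hφinj e (hsubA (Finset.mem_filter.mp he).1) f
        (hsubA (Finset.mem_filter.mp hf).1) hφ
  obtain ⟨hD₁diag, hD₁nc, hD₁card⟩ := hLayer E₁ hsub₁ hP₁
  obtain ⟨hD₂diag, hD₂nc, hD₂card⟩ := hLayer E₂ hsub₂ hP₂
  -- upper bounds
  have hUB₁ : D₁.card + 3 ≤ n :=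
    (Finset.card_range n) ▸ noncross_card_le D₁ (Finset.range n)
      (by rw [Finset.card_range]; omega) hD₁diag hD₁nc
  have hUB₂ : D₂.card + 3 ≤ n :=
    (Finset.card_range n) ▸ noncross_card_le D₂ (Finset.range n)
      (by rw [Finset.card_range]; omega) hD₂diag hD₂nc
  -- lower bounds via the extension lemma
  have hLB : ∀ A B : Finset (Sym2 Pt), E = A ∪ B → Disjoint A B →
      PlaneEdges A → PlaneEdges B → n ≤ ((A.filter dp).image (phi L)).card + 3 := by
    intro A B hU hdj hPA hPB
    have hsubA : A ⊆ E := by rw [hU]; exact Finset.subset_union_left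
    obtain ⟨hDdiag, hDnc, hDcard⟩ := hLayer A hsubA hPA
    set D := (A.filter dp).image (phi L) with hD
    by_contra hlt
    push_neg at hlt
    obtain ⟨a, b, c, d, ha, hb, hc, hd, hab, hbc, hcd, hacD, hbdD, hacC, hbdC⟩ :=
      noncross_extend D (Finset.range n) hDdiag hDnc (by rwa [Finset.card_range])
    rw [Finset.mem_range] at ha hb hc hd
    -- both candidate chords are compatible with layer A
    have hcompat : ∀ u v : ℕ, u < v → v < n → (∀ p ∈ D, ¬ Ilv (u, v) p) →
        ∀ f ∈ A, ¬ Ilv (u, v) (phi L f) := by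
      intro u v huv hvn hC f hf
      obtain ⟨k, l, hk, hl, hkl, hfeq, hfφ⟩ := hrepE f (hsubA hf)
      rcases hclassify k l hkl hl with hH | hDg
      · rw [hfφ]
        exact (hHullNI k l u v hH huv hvn).2
      · have hfD : phi L f ∈ D := by
          rw [hD]
          exact Finset.mem_image_of_mem _
            (Finset.mem_filter.mpr ⟨hf, by rw [hdp]; simp only; rw [hfφ]; exact hDg⟩)
        exact hC _ hfD
    have he1 : s(L[a]'ha, L[c]'hc) ∈ E :=
      hIns A B hU hdj hPA hPB a c ha hc (by omega)
        (hcompat a c (by omega) hc hacC)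
    have he2 : s(L[b]'hb, L[d]'hd) ∈ E :=
      hIns A B hU hdj hPA hPB b d hb hd (by omega)
        (hcompat b d (by omega) hd hbdC)
    have hφ1 : phi L s(L[a]'ha, L[c]'hc) = (a, c) := phi_val hnd ha hc (by omega)
    have hφ2 : phi L s(L[b]'hb, L[d]'hd) = (b, d) := phi_val hnd hb hd (by omega)
    -- they are not in layer A, so they are in layer B
    have hnotA : ∀ u v : ℕ, ∀ hu : u < n, ∀ hv : v < n, u < v →
        DiagOn (Finset.range n) (u, v) → (u, v) ∉ D →
        s(L[u]'hu, L[v]'hv) ∈ E → s(L[u]'hu, L[v]'hv) ∈ B := by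
      intro u v hu hv huv hDg hnD heE
      have hφ : phi L s(L[u]'hu, L[v]'hv) = (u, v) := phi_val hnd hu hv huv
      rcases Finset.mem_union.mp (by rw [← hU]; exact heE) with h1 | h2
      · exfalso
        apply hnD
        rw [hD, ← hφ]
        exact Finset.mem_image_of_mem _
          (Finset.mem_filter.mpr ⟨h1, by rw [hdp]; simp only; rw [hφ]; exact hDg⟩)
      · exact h2
    have hDac : DiagOn (Finset.range n) (a, c) :=
      ⟨Finset.mem_range.mpr ha, Finset.mem_range.mpr hc, by omega,
        ⟨b, Finset.mem_range.mpr hb, by simp; omega⟩,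
        ⟨d, Finset.mem_range.mpr hd, by simp; omega⟩⟩
    have hDbd : DiagOn (Finset.range n) (b, d) :=
      ⟨Finset.mem_range.mpr hb, Finset.mem_range.mpr hd, by omega,
        ⟨c, Finset.mem_range.mpr hc, by simp; omega⟩,
        ⟨a, Finset.mem_range.mpr ha, by simp; omega⟩⟩
    have he1B : s(L[a]'ha, L[c]'hc) ∈ B := hnotA a c ha hc (by omega) hDac hacD he1
    have he2B : s(L[b]'hb, L[d]'hd) ∈ B := hnotA b d hb hd (by omega) hDbd hbdD he2
    have hne12 : s(L[a]'ha, L[c]'hc) ≠ s(L[b]'hb, L[d]'hd) := by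
      intro hcon
      have := congrArg (phi L) hcon
      rw [hφ1, hφ2] at this
      injection this with h1 h2
      omega
    have hdisj12 := hPB _ he1B _ he2B hne12
    rw [hseg, hseg] at hdisj12
    have := segs_cross_of_ilv hnd hcert a b c d ha hb hc hd hab hbc hcd
    rw [hdisj12] at this
    exact Set.not_nonempty_empty this
  have hLB₁ : n ≤ D₁.card + 3 := hLB E₁ E₂ hEU hdisj hP₁ hP₂
  have hLB₂ : n ≤ D₂.card + 3 :=
    hLB E₂ E₁ (by rw [hEU, Finset.union_comm]) hdisj.symm hP₂ hP₁
  -- the hull edges are all present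
  set HullE : Finset (Sym2 Pt) := E.filter (fun e => phi L e ∈ Hull) with hHullE
  have hHullSurj : ∀ p ∈ Hull, ∃ e ∈ HullE, phi L e = p := by
    rintro ⟨i, j⟩ hp
    obtain ⟨hij, hjn⟩ := hHullValid i j hp
    have hin : i < n := by omega
    have hcompat : ∀ f ∈ E₁, ¬ Ilv (i, j) (phi L f) := by
      intro f hf
      obtain ⟨k, l, hk, hl, hkl, hfeq, hfφ⟩ := hrepE f (hsub₁ hf)
      rw [hfφ]
      exact (hHullNI i j k l hp hkl hl).1
    have he : s(L[i]'hin, L[j]'hjn) ∈ E :=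
      hIns E₁ E₂ hEU hdisj hP₁ hP₂ i j hin hjn hij hcompat
    have hφ : phi L s(L[i]'hin, L[j]'hjn) = (i, j) := phi_val hnd hin hjn hij
    exact ⟨_, Finset.mem_filter.mpr ⟨he, by rw [hφ]; exact hp⟩, hφ⟩
  have hHullEimg : HullE.image (phi L) = Hull := by
    apply Finset.Subset.antisymm
    · intro p hp
      rw [Finset.mem_image] at hp
      obtain ⟨e, he, rfl⟩ := hp
      exact (Finset.mem_filter.mp he).2
    · intro p hp
      obtain ⟨e, he, hφ⟩ := hHullSurj p hp
      rw [Finset.mem_image]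
      exact ⟨e, he, hφ⟩
  have hHullEcard : HullE.card = n := by
    have h1 : (HullE.image (phi L)).card = HullE.card := by
      apply Finset.card_image_of_injOn
      intro e he f hf hφ
      exact hφinj e (Finset.mem_filter.mp he).1 f (Finset.mem_filter.mp hf).1 hφ
    rw [← h1, hHullEimg, hHullCard]
  -- total count
  have hfiltereq : ∀ A : Finset (Sym2 Pt), A ⊆ E →
      A.filter (fun e => ¬ phi L e ∈ Hull) = A.filter dp := by
    intro A hsubA
    apply Finset.filter_congr
    intro e he
    obtain ⟨i, j, hi, hj, hij, heq, heφ⟩ := hrepE e (hsubA he)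
    rw [hdp]
    simp only [heφ, eq_iff_iff]
    rcases hclassify i j hij hj with hH | hD
    · have := hHullNotDiag i j hH
      constructor
      · intro hcon; exact absurd hH hcon
      · intro hcon; exact absurd hcon this
    · have : (i, j) ∉ Hull := fun hc => hHullNotDiag i j hc hD
      constructor
      · intro _; exact hD
      · intro _; exact this
  have hDc1 : D₁.card = (E₁.filter dp).card := by rw [hD₁]; exact hD₁card
  have hDc2 : D₂.card = (E₂.filter dp).card := by rw [hD₂]; exact hD₂card
  have h0 := Finset.card_filter_add_card_filter_not
    (s := E) (p := fun e => phi L e ∈ Hull)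
  have h1 : E.filter (fun e => ¬ phi L e ∈ Hull)
      = E₁.filter dp ∪ E₂.filter dp := by
    conv_lhs => rw [hEU]
    rw [Finset.filter_union, hfiltereq E₁ hsub₁, hfiltereq E₂ hsub₂]
  have h2 : (E₁.filter dp ∪ E₂.filter dp).card
      = (E₁.filter dp).card + (E₂.filter dp).card :=
    Finset.card_union_of_disjoint (Finset.disjoint_filter_filter hdisj)
  rw [h1, h2] at h0
  have h3 : (E.filter (fun e => phi L e ∈ Hull)).card = n := hHullEcard
  have hnS : n = S.card := hlen
  omega
end

section
/- For all integers h and n with 4 ≤ h ≤ n there exists a set S of n points in the plane in general position with exactly h convex-hull vertices such that every biplane graph (S,E) on S has |E| ≤ 4n − h − 6. -/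
namespace BPT

/-! ### 2D determinants and the segment-crossing lemma -/

def det2 (u v : ℝ × ℝ) : ℝ := u.1 * v.2 - u.2 * v.1

theorem cross_nonempty (a b c d : ℝ × ℝ)
    (h1 : det2 (b - a) (c - a) < 0) (h2 : 0 < det2 (b - a) (d - a))
    (h3 : 0 < det2 (d - c) (a - c)) (h4 : det2 (d - c) (b - c) < 0) :
    (openSegment ℝ a b ∩ openSegment ℝ c d).Nonempty := by
  set B1 : ℝ := det2 (d - c) (a - c) with hB1
  set B2 : ℝ := det2 (d - c) (b - c) with hB2
  set A1 : ℝ := det2 (b - a) (c - a) with hA1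
  set A2 : ℝ := det2 (b - a) (d - a) with hA2
  have hBden : 0 < B1 - B2 := by linarith
  have hAden : 0 < A2 - A1 := by linarith
  set τ : ℝ := B1 / (B1 - B2) with hτ
  set σ : ℝ := (-A1) / (A2 - A1) with hσ
  have hτ0 : 0 < τ := div_pos h3 hBden
  have hτ1 : τ < 1 := by
    rw [hτ, div_lt_one hBden]; linarith
  have hσ0 : 0 < σ := div_pos (by linarith) hAden
  have hσ1 : σ < 1 := by
    rw [hσ, div_lt_one hAden]; linarith
  refine ⟨a + τ • (b - a), ?_, ?_⟩
  · rw [openSegment_eq_image' ℝ a b]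
    exact ⟨τ, ⟨hτ0, hτ1⟩, rfl⟩
  · rw [openSegment_eq_image' ℝ c d]
    refine ⟨σ, ⟨hσ0, hσ1⟩, ?_⟩
    have hkey : ((B1 - B2) * (A2 - A1)) • (c + σ • (d - c)) =
        ((B1 - B2) * (A2 - A1)) • (a + τ • (b - a)) := by
      obtain ⟨a1, a2⟩ := a; obtain ⟨b1, b2⟩ := b
      obtain ⟨c1, c2⟩ := c; obtain ⟨d1, d2⟩ := d
      simp only [hσ, hτ, hB1, hB2, hA1, hA2, det2, Prod.smul_mk, Prod.mk_add_mk,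
        Prod.smul_def, Prod.fst, Prod.snd, Prod.mk_sub_mk, smul_eq_mul] at *
      have e1 : (B1 - B2) ≠ 0 := ne_of_gt hBden
      have e2 : (A2 - A1) ≠ 0 := ne_of_gt hAden
      apply Prod.ext <;> simp only [Prod.fst, Prod.snd] <;> field_simp <;> ring
    have hne : ((B1 - B2) * (A2 - A1)) ≠ 0 := by positivity
    have := smul_right_injective (ℝ × ℝ) hne (by exact hkey)
    simpa using this

/-! ### The combinatorial diagonal lemma -/

theorem diag_bound (N : ℕ) : ∀ (V : Finset ℕ) (D : Finset (ℕ × ℕ)),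
    V.card ≤ N →
    (∀ p ∈ D, p.1 ∈ V ∧ p.2 ∈ V ∧ p.1 < p.2 ∧
      (∃ k ∈ V, p.1 < k ∧ k < p.2) ∧ (∃ x ∈ V, x < p.1 ∨ p.2 < x)) →
    (∀ p ∈ D, ∀ q ∈ D, ¬(p.1 < q.1 ∧ q.1 < p.2 ∧ p.2 < q.2)) →
    D.card ≤ V.card - 3 := by
  induction N with
  | zero =>
    intro V D hVN hmem hnc
    rcases D.eq_empty_or_nonempty with rfl | ⟨e, he⟩
    · simp
    · obtain ⟨h1, _⟩ := hmem e he
      have : V = ∅ := Finset.card_eq_zero.mp (Nat.le_zero.mp hVN)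
      simp [this] at h1
  | succ N ih =>
    intro V D hVN hmem hnc
    rcases D.eq_empty_or_nonempty with rfl | ⟨e, he⟩
    · simp
    obtain ⟨he1V, he2V, helt, ⟨k, hkV, hk1, hk2⟩, ⟨x, hxV, hx⟩⟩ := hmem e he
    classical
    set Inside : ℕ × ℕ → Prop := fun p => (e.1 < p.1 ∧ p.1 < e.2) ∨ (e.1 < p.2 ∧ p.2 < e.2)
      with hInside
    set V1 := V.filter (fun y => e.1 ≤ y ∧ y ≤ e.2) with hV1
    set V2 := V.filter (fun y => y ≤ e.1 ∨ e.2 ≤ y) with hV2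
    set D1 := D.filter (fun p => p ≠ e ∧ Inside p) with hD1
    set D2 := D.filter (fun p => p ≠ e ∧ ¬ Inside p) with hD2
    have hD1sub : ∀ p ∈ D1, e.1 ≤ p.1 ∧ p.2 ≤ e.2 := by
      intro p hp
      rw [hD1, Finset.mem_filter] at hp
      obtain ⟨hpD, hpne, hins⟩ := hp
      obtain ⟨_, _, hplt, _, _⟩ := hmem p hpD
      have h1 := hnc e he p hpD
      have h2 := hnc p hpD e he
      rcases hins with ⟨ha, hb⟩ | ⟨ha, hb⟩
      · constructor
        · omega
        · by_contra hcon; push_neg at hcon; exact h1 ⟨ha, hb, hcon⟩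
      · constructor
        · by_contra hcon; push_neg at hcon; exact h2 ⟨hcon, ha, hb⟩
        · omega
    have hD2sub : ∀ p ∈ D2, (p.1 ≤ e.1 ∨ e.2 ≤ p.1) ∧ (p.2 ≤ e.1 ∨ e.2 ≤ p.2) := by
      intro p hp
      rw [hD2, Finset.mem_filter] at hp
      obtain ⟨hpD, hpne, hins⟩ := hp
      rw [hInside] at hins; push_neg at hins
      constructor <;> omega
    have hmem1 : ∀ p ∈ D1, p.1 ∈ V1 ∧ p.2 ∈ V1 ∧ p.1 < p.2 ∧
        (∃ k ∈ V1, p.1 < k ∧ k < p.2) ∧ (∃ x ∈ V1, x < p.1 ∨ p.2 < x) := by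
      intro p hp
      have hsub := hD1sub p hp
      rw [hD1, Finset.mem_filter] at hp
      obtain ⟨hpD, hpne, hins⟩ := hp
      obtain ⟨hp1V, hp2V, hplt, ⟨kk, hkkV, hkk1, hkk2⟩, _⟩ := hmem p hpD
      have he1V1 : e.1 ∈ V1 := by rw [hV1, Finset.mem_filter]; exact ⟨he1V, le_refl _, le_of_lt helt⟩
      have he2V1 : e.2 ∈ V1 := by rw [hV1, Finset.mem_filter]; exact ⟨he2V, le_of_lt helt, le_refl _⟩
      refine ⟨?_, ?_, hplt, ⟨kk, ?_, hkk1, hkk2⟩, ?_⟩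
      · rw [hV1, Finset.mem_filter]; exact ⟨hp1V, hsub.1, by omega⟩
      · rw [hV1, Finset.mem_filter]; exact ⟨hp2V, by omega, hsub.2⟩
      · rw [hV1, Finset.mem_filter]; refine ⟨hkkV, by omega, by omega⟩
      · rcases Nat.lt_or_ge e.1 p.1 with hlt | hge
        · exact ⟨e.1, he1V1, Or.inl hlt⟩
        · have hp1 : p.1 = e.1 := le_antisymm (by omega) hsub.1
          have hp2 : p.2 < e.2 := by
            rcases lt_or_eq_of_le hsub.2 with h | h
            · exact h
            · exfalso; exact hpne (Prod.ext hp1 h)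
          exact ⟨e.2, he2V1, Or.inr hp2⟩
    have hmem2 : ∀ p ∈ D2, p.1 ∈ V2 ∧ p.2 ∈ V2 ∧ p.1 < p.2 ∧
        (∃ k ∈ V2, p.1 < k ∧ k < p.2) ∧ (∃ x ∈ V2, x < p.1 ∨ p.2 < x) := by
      intro p hp
      have hsub := hD2sub p hp
      rw [hD2, Finset.mem_filter] at hp
      obtain ⟨hpD, hpne, hins⟩ := hp
      obtain ⟨hp1V, hp2V, hplt, ⟨kk, hkkV, hkk1, hkk2⟩, ⟨xx, hxxV, hxx⟩⟩ := hmem p hpD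
      have he1V2 : e.1 ∈ V2 := by rw [hV2, Finset.mem_filter]; exact ⟨he1V, Or.inl (le_refl _)⟩
      have he2V2 : e.2 ∈ V2 := by rw [hV2, Finset.mem_filter]; exact ⟨he2V, Or.inr (le_refl _)⟩
      refine ⟨?_, ?_, hplt, ?_, ?_⟩
      · rw [hV2, Finset.mem_filter]; exact ⟨hp1V, by omega⟩
      · rw [hV2, Finset.mem_filter]; exact ⟨hp2V, by omega⟩
      · by_cases hkk : kk ≤ e.1 ∨ e.2 ≤ kk
        · exact ⟨kk, by rw [hV2, Finset.mem_filter]; exact ⟨hkkV, hkk⟩, hkk1, hkk2⟩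
        · push_neg at hkk
          have hsp1 : p.1 ≤ e.1 := by omega
          have hsp2 : e.2 ≤ p.2 := by omega
          rcases Nat.lt_or_ge p.1 e.1 with h | h
          · exact ⟨e.1, he1V2, h, by omega⟩
          · have hp1e : p.1 = e.1 := by omega
            have hp2e : e.2 < p.2 := by
              rcases lt_or_eq_of_le hsp2 with h' | h'
              · exact h'
              · exfalso; exact hpne (Prod.ext hp1e h'.symm)
            exact ⟨e.2, he2V2, by omega, hp2e⟩
      · by_cases hxx2 : xx ≤ e.1 ∨ e.2 ≤ xx
        · exact ⟨xx, by rw [hV2, Finset.mem_filter]; exact ⟨hxxV, hxx2⟩, hxx⟩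
        · push_neg at hxx2
          rcases hxx with hxa | hxb
          · have : e.2 ≤ p.1 := by omega
            exact ⟨e.1, he1V2, Or.inl (by omega)⟩
          · have : p.2 ≤ e.1 := by omega
            exact ⟨e.2, he2V2, Or.inr (by omega)⟩
    have hV1card : 3 ≤ V1.card := by
      have : {e.1, k, e.2} ⊆ V1 := by
        intro y hy
        simp only [Finset.mem_insert, Finset.mem_singleton] at hy
        rw [hV1, Finset.mem_filter]
        rcases hy with rfl | rfl | rfl
        · exact ⟨he1V, le_refl _, le_of_lt helt⟩
        · exact ⟨hkV, by omega, by omega⟩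
        · exact ⟨he2V, le_of_lt helt, le_refl _⟩
      calc 3 = ({e.1, k, e.2} : Finset ℕ).card := by
                rw [Finset.card_insert_of_notMem (by simp; omega),
                    Finset.card_insert_of_notMem (by simp; omega), Finset.card_singleton]
        _ ≤ V1.card := Finset.card_le_card this
    have hV2card : 3 ≤ V2.card := by
      have hsub : {x, e.1, e.2} ⊆ V2 := by
        intro y hy
        simp only [Finset.mem_insert, Finset.mem_singleton] at hy
        rw [hV2, Finset.mem_filter]
        rcases hy with rfl | rfl | rfl
        · exact ⟨hxV, by omega⟩
        · exact ⟨he1V, Or.inl (le_refl _)⟩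
        · exact ⟨he2V, Or.inr (le_refl _)⟩
      calc 3 = ({x, e.1, e.2} : Finset ℕ).card := by
                rw [Finset.card_insert_of_notMem (by simp; omega),
                    Finset.card_insert_of_notMem (by simp; omega), Finset.card_singleton]
        _ ≤ V2.card := Finset.card_le_card hsub
    have hV1lt : V1.card < V.card := by
      apply Finset.card_lt_card
      constructor
      · exact Finset.filter_subset _ _
      · intro hsubV
        have : x ∈ V1 := hsubV hxV
        rw [hV1, Finset.mem_filter] at this
        omega
    have hV2lt : V2.card < V.card := by
      apply Finset.card_lt_card
      constructor
      · exact Finset.filter_subset _ _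
      · intro hsubV
        have : k ∈ V2 := hsubV hkV
        rw [hV2, Finset.mem_filter] at this
        omega
    have hVsum : V1.card + V2.card = V.card + 2 := by
      have hunion : V1 ∪ V2 = V := by
        apply Finset.Subset.antisymm
        · exact Finset.union_subset (Finset.filter_subset _ _) (Finset.filter_subset _ _)
        · intro y hy
          rw [Finset.mem_union, hV1, hV2, Finset.mem_filter, Finset.mem_filter]
          by_cases h : e.1 ≤ y ∧ y ≤ e.2
          · exact Or.inl ⟨hy, h⟩
          · exact Or.inr ⟨hy, by omega⟩
      have hinter : V1 ∩ V2 = {e.1, e.2} := by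
        apply Finset.Subset.antisymm
        · intro y hy
          rw [Finset.mem_inter, hV1, hV2, Finset.mem_filter, Finset.mem_filter] at hy
          simp only [Finset.mem_insert, Finset.mem_singleton]
          omega
        · intro y hy
          simp only [Finset.mem_insert, Finset.mem_singleton] at hy
          rw [Finset.mem_inter, hV1, hV2, Finset.mem_filter, Finset.mem_filter]
          rcases hy with rfl | rfl
          · exact ⟨⟨he1V, le_refl _, le_of_lt helt⟩, he1V, Or.inl (le_refl _)⟩
          · exact ⟨⟨he2V, le_of_lt helt, le_refl _⟩, he2V, Or.inr (le_refl _)⟩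
      have h2 : ({e.1, e.2} : Finset ℕ).card = 2 := by
        rw [Finset.card_insert_of_notMem (by simp; omega), Finset.card_singleton]
      have := Finset.card_union_add_card_inter V1 V2
      rw [hunion, hinter, h2] at this
      omega
    have hDsum : D.card = D1.card + D2.card + 1 := by
      have herase : D.erase e = D1 ∪ D2 := by
        apply Finset.Subset.antisymm
        · intro p hp
          rw [Finset.mem_erase] at hp
          rw [Finset.mem_union, hD1, hD2, Finset.mem_filter, Finset.mem_filter]
          by_cases h : Inside p
          · exact Or.inl ⟨hp.2, hp.1, h⟩
          · exact Or.inr ⟨hp.2, hp.1, h⟩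
        · intro p hp
          rw [Finset.mem_union, hD1, hD2, Finset.mem_filter, Finset.mem_filter] at hp
          rw [Finset.mem_erase]
          rcases hp with ⟨hpD, hpne, _⟩ | ⟨hpD, hpne, _⟩ <;> exact ⟨hpne, hpD⟩
      have hdisj : Disjoint D1 D2 := by
        rw [Finset.disjoint_left]
        intro p hp1 hp2
        rw [hD1, Finset.mem_filter] at hp1
        rw [hD2, Finset.mem_filter] at hp2
        exact hp2.2.2 hp1.2.2
      have h1 := Finset.card_union_of_disjoint hdisj
      have h2 := Finset.card_erase_of_mem he
      rw [herase, h1] at h2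
      have : 1 ≤ D.card := Finset.card_pos.mpr ⟨e, he⟩
      omega
    have ih1 := ih V1 D1 (by omega)
      hmem1 (fun p hp q hq => hnc p (Finset.mem_of_mem_filter p hp) q (Finset.mem_of_mem_filter q hq))
    have ih2 := ih V2 D2 (by omega)
      hmem2 (fun p hp q hq => hnc p (Finset.mem_of_mem_filter p hp) q (Finset.mem_of_mem_filter q hq))
    omega

end BPT
namespace BPT

/-! ### The point configuration -/

noncomputable section

/-- Abscissas: `i` for `i ≤ m+1`, then a gap. -/
def tt (m i : ℕ) : ℝ := if i ≤ m + 1 then (i : ℝ) else (i : ℝ) + (m + 1)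

def Xc (m : ℕ) : ℝ := ((m : ℝ) + 1) ^ 2

def Yc (m : ℕ) : ℝ := -(2 * m + 1) * Xc m - m * (m + 1) - 1

/-- The point set: `pt m 0` far bottom-left, the others on a parabola. -/
def pt (m i : ℕ) : Pt :=
  if i = 0 then (-(Xc m), Yc m) else (tt m i, (tt m i) ^ 2)

def sg (m i j k : ℕ) : ℝ := det2 (pt m j - pt m i) (pt m k - pt m i)

lemma Xc_pos (m : ℕ) : 0 < Xc m := by
  unfold Xc; positivity

lemma tt_lt_tt {m a b : ℕ} (h : a < b) : tt m a < tt m b := by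
  unfold tt
  have hab : (a:ℝ) < b := by exact_mod_cast h
  have hm : (0:ℝ) ≤ (m:ℝ) + 1 := by positivity
  by_cases ha : a ≤ m + 1 <;> by_cases hb : b ≤ m + 1 <;> simp [ha, hb] <;>
    first | exact h | omega | linarith

lemma tt_strictMono (m : ℕ) : StrictMono (tt m) := fun _ _ h => tt_lt_tt h

lemma tt_one_le {m i : ℕ} (h : 1 ≤ i) : 1 ≤ tt m i := by
  unfold tt
  by_cases hi : i ≤ m + 1 <;> simp [hi]
  · exact_mod_cast h
  · have : (1:ℝ) ≤ i := by exact_mod_cast h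
    have : (0:ℝ) ≤ m := by positivity
    linarith

lemma tt_ge_m1 {m i : ℕ} (h : m + 1 ≤ i) : (m:ℝ) + 1 ≤ tt m i := by
  unfold tt
  by_cases hi : i ≤ m + 1
  · rw [if_pos hi]
    exact_mod_cast h
  · rw [if_neg hi]
    have h0 : (0:ℝ) ≤ i := by positivity
    linarith

lemma sg_swap (m a b c : ℕ) : sg m a b c = - sg m a c b := by
  unfold sg det2; ring

lemma sg_cyc (m a b c : ℕ) : sg m a b c = sg m b c a := by
  unfold sg det2
  obtain ⟨x1, y1⟩ := pt m a
  obtain ⟨x2, y2⟩ := pt m b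
  obtain ⟨x3, y3⟩ := pt m c
  simp [Prod.mk_sub_mk]
  ring

/-- parabola triples, `a ≥ 1`. -/
lemma sg_pos_para {m a b c : ℕ} (ha : 1 ≤ a) (hab : a < b) (hbc : b < c) :
    0 < sg m a b c := by
  have h1 : tt m a < tt m b := tt_lt_tt hab
  have h2 : tt m b < tt m c := tt_lt_tt hbc
  have hb1 : b ≠ 0 := by omega
  have hc1 : c ≠ 0 := by omega
  have ha1 : a ≠ 0 := by omega
  unfold sg det2 pt
  simp only [ha1, hb1, hc1, if_neg, ite_false, Prod.fst_sub, Prod.snd_sub]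
  nlinarith [mul_pos (mul_pos (sub_pos.mpr h1) (sub_pos.mpr (h1.trans h2))) (sub_pos.mpr h2)]

/-- flipped triples: `(0, b, c)` with `c ≤ m+1`. -/
lemma sg_neg_pocket {m b c : ℕ} (hb : 1 ≤ b) (hbc : b < c) (hc : c ≤ m + 1) :
    sg m 0 b c < 0 := by
  have hb0 : b ≠ 0 := by omega
  have hc0 : c ≠ 0 := by omega
  have htb : tt m b = (b : ℝ) := by unfold tt; simp [show b ≤ m + 1 by omega]
  have htc : tt m c = (c : ℝ) := by unfold tt; simp [hc]
  unfold sg det2 pt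
  simp only [hb0, hc0, ite_false, ite_true, Prod.fst_sub, Prod.snd_sub, htb, htc]
  have hkey : ((b:ℝ) - -(Xc m)) * ((c:ℝ)^2 - Yc m) - ((b:ℝ)^2 - Yc m) * ((c:ℝ) - -(Xc m))
      = ((c:ℝ) - b) * (Yc m + Xc m * (b + c) + b * c) := by ring
  rw [hkey]
  have hcb : (0:ℝ) < (c:ℝ) - b := by
    have : (b:ℝ) < c := by exact_mod_cast hbc
    linarith
  have hbm : (b:ℝ) ≤ m := by exact_mod_cast (by omega : b ≤ m)
  have hcm : (c:ℝ) ≤ m + 1 := by exact_mod_cast hc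
  have hbpos : (1:ℝ) ≤ b := by exact_mod_cast hb
  have hfac : Yc m + Xc m * (b + c) + b * c < 0 := by
    unfold Yc
    have hX := Xc_pos m
    nlinarith [mul_pos hX (sub_pos.mpr (lt_of_le_of_lt (le_refl ((b:ℝ)+c)) (by linarith : (b:ℝ)+c < 2*m+2)))]
  nlinarith

/-- unflipped triples at `0`: `(0, b, c)` with `c ≥ m+2`. -/
lemma sg_pos_far {m b c : ℕ} (hb : 1 ≤ b) (hbc : b < c) (hc : m + 2 ≤ c) :
    0 < sg m 0 b c := by
  have hb0 : b ≠ 0 := by omega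
  have hc0 : c ≠ 0 := by omega
  have htb1 : 1 ≤ tt m b := tt_one_le hb
  have htc : tt m c = (c : ℝ) + (m + 1) := by unfold tt; simp [show ¬ (c ≤ m + 1) by omega]
  have htbc : tt m b < tt m c := tt_lt_tt hbc
  unfold sg det2 pt
  simp only [hb0, hc0, ite_false, ite_true, Prod.fst_sub, Prod.snd_sub]
  have hkey : (tt m b - -(Xc m)) * ((tt m c)^2 - Yc m) - ((tt m b)^2 - Yc m) * (tt m c - -(Xc m))
      = (tt m c - tt m b) * (Yc m + Xc m * (tt m b + tt m c) + tt m b * tt m c) := by ring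
  rw [hkey]
  have htc23 : (2*(m:ℝ)+3) ≤ tt m c := by
    rw [htc]
    have : (m:ℝ) + 2 ≤ c := by exact_mod_cast hc
    linarith
  have hfac : 0 < Yc m + Xc m * (tt m b + tt m c) + tt m b * tt m c := by
    unfold Yc Xc
    nlinarith [sq_nonneg ((m:ℝ)+1), (Nat.cast_nonneg m : (0:ℝ) ≤ (m:ℝ))]
  nlinarith

/-- any sorted triple not `(0,·,≤ m+1)` is positively oriented -/
lemma sg_pos_sorted {m a b c : ℕ} (hab : a < b) (hbc : b < c)
    (h : 1 ≤ a ∨ m + 2 ≤ c) : 0 < sg m a b c := by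
  rcases Nat.eq_zero_or_pos a with rfl | ha
  · rcases h with h | h
    · omega
    · exact sg_pos_far (by omega) hbc h
  · exact sg_pos_para ha hab hbc

/-- orientation never vanishes on distinct triples -/
lemma sg_ne_sorted {m a b c : ℕ} (hab : a < b) (hbc : b < c) : sg m a b c ≠ 0 := by
  rcases Nat.eq_zero_or_pos a with rfl | ha
  · by_cases hc : c ≤ m + 1
    · exact ne_of_lt (sg_neg_pocket (by omega) hbc hc)
    · exact ne_of_gt (sg_pos_far (by omega) hbc (by omega))
  · exact ne_of_gt (sg_pos_para ha hab hbc)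

lemma sg_ne {m a b c : ℕ} (hab : a ≠ b) (hac : a ≠ c) (hbc : b ≠ c) :
    sg m a b c ≠ 0 := by
  rcases lt_trichotomy a b with h1 | h1 | h1
  · rcases lt_trichotomy b c with h2 | h2 | h2
    · exact sg_ne_sorted h1 h2
    · exact absurd h2 hbc
    · rcases lt_trichotomy a c with h3 | h3 | h3
      · rw [sg_swap]
        exact neg_ne_zero.mpr (sg_ne_sorted h3 h2)
      · exact absurd h3 hac
      · rw [sg_cyc, sg_cyc]
        exact sg_ne_sorted h3 h1
  · exact absurd h1 hab
  · rcases lt_trichotomy a c with h2 | h2 | h2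
    · rw [sg_cyc, sg_swap]
      exact neg_ne_zero.mpr (sg_ne_sorted h1 h2)
    · exact absurd h2 hac
    · rcases lt_trichotomy b c with h3 | h3 | h3
      · rw [sg_cyc]
        exact sg_ne_sorted h3 h2
      · exact absurd h3 hbc
      · rw [sg_cyc, sg_cyc, sg_swap]
        exact neg_ne_zero.mpr (sg_ne_sorted h3 h1)

lemma pt_fst_pos {m i : ℕ} (hi : i ≠ 0) : (pt m i).1 = tt m i := by
  unfold pt; simp [hi]

lemma pt_inj (m : ℕ) : Function.Injective (pt m) := by
  intro i j h
  by_cases hi : i = 0 <;> by_cases hj : j = 0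
  · omega
  · exfalso
    have h1 : (pt m i).1 = -(Xc m) := by unfold pt; simp [hi]
    have h2 : (pt m j).1 = tt m j := pt_fst_pos hj
    have := Xc_pos m
    have := tt_one_le (m := m) (i := j) (by omega)
    rw [h] at h1
    rw [h2] at h1
    linarith
  · exfalso
    have h1 : (pt m j).1 = -(Xc m) := by unfold pt; simp [hj]
    have h2 : (pt m i).1 = tt m i := pt_fst_pos hi
    have := Xc_pos m
    have := tt_one_le (m := m) (i := i) (by omega)
    rw [← h] at h1
    rw [h2] at h1
    linarith
  · have h1 : tt m i = tt m j := by
      rw [← pt_fst_pos hi, ← pt_fst_pos hj, h]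
    exact (tt_strictMono m).injective h1

end

/-! ### Convexity helpers -/

/-- affine determinant identity -/
lemma det_affine (a b c d : Pt) :
    det2 (c - b) (d - b) + det2 (b - a) (d - a) + det2 (c - a) (b - a)
      = det2 (c - a) (d - a) := by
  obtain ⟨a1, a2⟩ := a; obtain ⟨b1, b2⟩ := b
  obtain ⟨c1, c2⟩ := c; obtain ⟨d1, d2⟩ := d
  simp only [det2, Prod.mk_sub_mk]
  ring

/-- Cramer identity -/
lemma det_cramer (a b c d : Pt) :
    (det2 (c - a) (d - a)) • b =
      (det2 (c - b) (d - b)) • a + (det2 (b - a) (d - a)) • c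
        + (det2 (c - a) (b - a)) • d := by
  obtain ⟨a1, a2⟩ := a; obtain ⟨b1, b2⟩ := b
  obtain ⟨c1, c2⟩ := c; obtain ⟨d1, d2⟩ := d
  simp only [det2, Prod.mk_sub_mk, Prod.smul_mk, Prod.mk_add_mk, smul_eq_mul, Prod.mk.injEq]
  constructor <;> ring

/-- a positive convex combination of three points is in their convex hull -/
lemma mem_convexHull_triple {a c d x : Pt} {α β γ : ℝ}
    (hα : 0 < α) (hβ : 0 < β) (hγ : 0 < γ) (hsum : α + β + γ = 1)
    (hx : α • a + β • c + γ • d = x) :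
    x ∈ convexHull ℝ ({a, c, d} : Set Pt) := by
  set t : ℝ := β + γ with ht
  have ht0 : 0 < t := by linarith
  set y : Pt := (β / t) • c + (γ / t) • d with hy
  have hyseg : y ∈ segment ℝ c d :=
    ⟨β / t, γ / t, by positivity, by positivity, by field_simp; exact ht.symm, rfl⟩
  have hycd : y ∈ convexHull ℝ ({a, c, d} : Set Pt) := by
    have : segment ℝ c d ⊆ convexHull ℝ ({a, c, d} : Set Pt) := by
      apply segment_subset_convexHull <;> simp
    exact this hyseg
  have hahull : a ∈ convexHull ℝ ({a, c, d} : Set Pt) :=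
    subset_convexHull ℝ _ (by simp)
  have hxeq : α • a + t • y = x := by
    rw [hy, smul_add, smul_smul, smul_smul, mul_div_cancel₀ _ (ne_of_gt ht0),
      mul_div_cancel₀ _ (ne_of_gt ht0), ← add_assoc]
    exact hx
  have := (convex_convexHull ℝ ({a, c, d} : Set Pt)) hahull hycd hα.le ht0.le
    (by linarith)
  rwa [hxeq] at this

/-- linear separation gives non-membership in a convex hull -/
lemma not_mem_hull_of_sep {u1 u2 c : ℝ} {A : Set Pt} {p : Pt}
    (h : ∀ q ∈ A, u1 * q.1 + u2 * q.2 < c) (hp : c ≤ u1 * p.1 + u2 * p.2) :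
    p ∉ convexHull ℝ A := by
  intro hmem
  have hlin : IsLinearMap ℝ (fun w : Pt => u1 * w.1 + u2 * w.2) := by
    constructor
    · intro x y; simp [Prod.fst_add, Prod.snd_add]; ring
    · intro t x; simp [Prod.smul_def, smul_eq_mul]; ring
  have hsub : A ⊆ {w : Pt | u1 * w.1 + u2 * w.2 < c} := fun q hq => h q hq
  have := convexHull_min hsub (convex_halfSpace_lt hlin c) hmem
  simp only [Set.mem_setOf_eq] at this
  linarith

/-- a nonzero determinant certifies non-collinearity -/
lemma not_collinear_of_det {p q r : Pt} (h : det2 (q - p) (r - p) ≠ 0) :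
    ¬ Collinear ℝ ({p, q, r} : Set Pt) := by
  intro hcol
  rw [collinear_iff_of_mem (Set.mem_insert p {q, r})] at hcol
  obtain ⟨v, hv⟩ := hcol
  obtain ⟨rq, hrq⟩ := hv q (by simp)
  obtain ⟨rr, hrr⟩ := hv r (by simp)
  apply h
  have hq : q - p = rq • v := by rw [hrq]; simp
  have hr : r - p = rr • v := by rw [hrr]; simp
  rw [hq, hr]
  obtain ⟨v1, v2⟩ := v
  simp [det2, Prod.smul_mk, smul_eq_mul]
  ring

end BPT
namespace BPT

open scoped Classical

noncomputable section

/-- our point set -/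
def Sf (m n : ℕ) : Finset Pt := (Finset.range n).image (pt m)

lemma mem_Sf {m n i : ℕ} (h : i < n) : pt m i ∈ Sf m n :=
  Finset.mem_image_of_mem _ (Finset.mem_range.mpr h)

lemma Sf_card (m n : ℕ) : (Sf m n).card = n := by
  rw [Sf, Finset.card_image_of_injective _ (pt_inj m), Finset.card_range]

lemma genpos (m n : ℕ) : GenPos (Sf m n) := by
  intro p hp q hq r hr hpq hpr hqr
  obtain ⟨i, hi, rfl⟩ := Finset.mem_image.mp hp
  obtain ⟨j, hj, rfl⟩ := Finset.mem_image.mp hq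
  obtain ⟨k, hk, rfl⟩ := Finset.mem_image.mp hr
  apply not_collinear_of_det
  exact sg_ne (fun hij => hpq (by rw [hij])) (fun hik => hpr (by rw [hik]))
    (fun hjk => hqr (by rw [hjk]))

/-- `pt m 0` is a hull vertex -/
lemma hull0 (m n : ℕ) (hn : 0 < n) : HullVertex (Sf m n) (pt m 0) := by
  refine ⟨mem_Sf hn, ?_⟩
  apply not_mem_hull_of_sep (u1 := -1) (u2 := 0) (c := 0)
  · intro q hq
    obtain ⟨hqS, hqne⟩ := hq
    obtain ⟨j, hj, rfl⟩ := Finset.mem_image.mp hqS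
    have hj0 : j ≠ 0 := by
      intro hcon; subst hcon; exact hqne rfl
    rw [pt_fst_pos hj0]
    have := tt_one_le (m := m) (i := j) (by omega)
    linarith
  · have h0 : (pt m 0).1 = -(Xc m) := by unfold pt; simp
    rw [h0]
    have := Xc_pos m
    linarith

/-- `pt m j` for `j ≥ m+1` is a hull vertex -/
lemma hullHi (m n j : ℕ) (hj : m + 1 ≤ j) (hjn : j < n) :
    HullVertex (Sf m n) (pt m j) := by
  have hj0 : j ≠ 0 := by omega
  have hTj : (m:ℝ) + 1 ≤ tt m j := tt_ge_m1 hj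
  refine ⟨mem_Sf hjn, ?_⟩
  apply not_mem_hull_of_sep (u1 := 2 * tt m j) (u2 := -1) (c := (tt m j)^2)
  · intro q hq
    obtain ⟨hqS, hqne⟩ := hq
    obtain ⟨k, hk, rfl⟩ := Finset.mem_image.mp hqS
    have hkj : k ≠ j := by
      intro hcon; subst hcon; exact hqne rfl
    by_cases hk0 : k = 0
    · subst hk0
      have h1 : (pt m 0).1 = -(Xc m) := by unfold pt; simp
      have h2 : (pt m 0).2 = Yc m := by unfold pt; simp
      rw [h1, h2]
      unfold Yc Xc
      have hm0 : (0:ℝ) ≤ m := by positivity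
      nlinarith [sq_nonneg (tt m j), sq_nonneg (tt m j - ((m:ℝ)+1))]
    · have h1 : (pt m k).1 = tt m k := pt_fst_pos hk0
      have h2 : (pt m k).2 = (tt m k)^2 := by unfold pt; simp [hk0]
      rw [h1, h2]
      have hne : tt m k ≠ tt m j := fun hcon => hkj ((tt_strictMono m).injective hcon)
      have hd0 : tt m j - tt m k ≠ 0 := sub_ne_zero.mpr (fun hcon => hne hcon.symm)
      have hsq : 0 < (tt m j - tt m k)^2 :=
        lt_of_le_of_ne (sq_nonneg _) (Ne.symm (pow_ne_zero 2 hd0))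
      nlinarith
  · have h1 : (pt m j).1 = tt m j := pt_fst_pos hj0
    have h2 : (pt m j).2 = (tt m j)^2 := by unfold pt; simp [hj0]
    rw [h1, h2]
    ring_nf
    linarith [sq_nonneg (tt m j)]

/-- pocket points are interior -/
lemma pocket_mem (m n i : ℕ) (hi1 : 1 ≤ i) (him : i ≤ m) (hn : m + 4 ≤ n) :
    pt m i ∈ convexHull ℝ ((↑(Sf m n) : Set Pt) \ {pt m i}) := by
  have hm1n : m + 1 < n - 1 := by omega
  have hn1 : m + 2 ≤ n - 1 := by omega
  set a := pt m 0 with ha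
  set x := pt m i with hxx
  set c := pt m (m+1) with hc
  set d := pt m (n-1) with hd
  set s : ℝ := det2 (c - a) (d - a) with hs
  set A : ℝ := det2 (c - x) (d - x) with hA
  set B : ℝ := det2 (x - a) (d - a) with hB
  set C : ℝ := det2 (c - a) (x - a) with hC
  have hs_pos : 0 < s := by
    rw [hs, ha, hc, hd]
    exact sg_pos_far (by omega) hm1n hn1
  have hA_pos : 0 < A := by
    rw [hA, hxx, hc, hd]
    exact sg_pos_para hi1 (by omega) hm1n
  have hB_pos : 0 < B := by
    rw [hB, ha, hxx, hd]
    exact sg_pos_far hi1 (by omega) hn1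
  have hC_pos : 0 < C := by
    rw [hC, ha, hc, hxx]
    have hswap : sg m 0 (m+1) i = - sg m 0 i (m+1) := sg_swap m 0 (m+1) i
    have : sg m 0 i (m+1) < 0 := sg_neg_pocket hi1 (by omega) (le_refl _)
    show 0 < sg m 0 (m+1) i
    rw [hswap]; linarith
  have hsum0 : A + B + C = s := by
    rw [hA, hB, hC, hs]; exact det_affine a x c d
  have hcramer : s • x = A • a + B • c + C • d := by
    rw [hA, hB, hC, hs]; exact det_cramer a x c d
  have hmem : x ∈ convexHull ℝ ({a, c, d} : Set Pt) := by
    apply mem_convexHull_triple (α := A / s) (β := B / s) (γ := C / s)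
      (div_pos hA_pos hs_pos) (div_pos hB_pos hs_pos) (div_pos hC_pos hs_pos)
    · field_simp
      exact hsum0
    · have hss : s ≠ 0 := ne_of_gt hs_pos
      calc (A/s) • a + (B/s) • c + (C/s) • d
          = s⁻¹ • (A • a) + s⁻¹ • (B • c) + s⁻¹ • (C • d) := by
            rw [div_eq_inv_mul, div_eq_inv_mul, div_eq_inv_mul,
              mul_smul, mul_smul, mul_smul]
        _ = s⁻¹ • (A • a + B • c + C • d) := by rw [smul_add, smul_add]
        _ = s⁻¹ • (s • x) := by rw [← hcramer]
        _ = x := by rw [smul_smul, inv_mul_cancel₀ hss, one_smul]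
  refine convexHull_mono ?_ hmem
  intro y hy
  simp only [Set.mem_insert_iff, Set.mem_singleton_iff] at hy
  have hinj := pt_inj m
  rcases hy with rfl | rfl | rfl
  · exact ⟨mem_Sf (by omega), fun hcon => by
      have : (0:ℕ) = i := hinj (ha ▸ hxx ▸ hcon)
      omega⟩
  · exact ⟨mem_Sf (by omega), fun hcon => by
      have : m + 1 = i := hinj (hc ▸ hxx ▸ hcon)
      omega⟩
  · exact ⟨mem_Sf (by omega), fun hcon => by
      have : n - 1 = i := hinj (hd ▸ hxx ▸ hcon)
      omega⟩

lemma hullcard (m n : ℕ) (hn : m + 4 ≤ n) : hullCard (Sf m n) = n - m := by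
  classical
  set Hs : Finset ℕ := insert 0 (Finset.Icc (m+1) (n-1)) with hHs
  have hset : {p : Pt | HullVertex (Sf m n) p} = ↑(Hs.image (pt m)) := by
    ext p
    simp only [Set.mem_setOf_eq, Finset.coe_image, Set.mem_image, Finset.mem_coe]
    constructor
    · rintro ⟨hpS, hnot⟩
      obtain ⟨i, hi, rfl⟩ := Finset.mem_image.mp hpS
      rw [Finset.mem_range] at hi
      refine ⟨i, ?_, rfl⟩
      rw [hHs, Finset.mem_insert, Finset.mem_Icc]
      by_cases hi0 : i = 0
      · exact Or.inl hi0
      by_cases him : m + 1 ≤ i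
      · exact Or.inr ⟨him, by omega⟩
      · exact absurd (pocket_mem m n i (by omega) (by omega) hn) hnot
    · rintro ⟨i, hi, rfl⟩
      rw [hHs, Finset.mem_insert, Finset.mem_Icc] at hi
      rcases hi with rfl | ⟨h1, h2⟩
      · exact hull0 m n (by omega)
      · exact hullHi m n i h1 (by omega)
  rw [hullCard, hset, Set.ncard_coe_finset,
    Finset.card_image_of_injective _ (pt_inj m), hHs,
    Finset.card_insert_of_notMem (by simp), Nat.card_Icc]
  omega

/-- canonical index of a point -/
def idxP (m : ℕ) (p : Pt) : ℕ := if h : ∃ i, pt m i = p then h.choose else 0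

lemma idxP_pt (m i : ℕ) : idxP m (pt m i) = i := by
  have h : ∃ k, pt m k = pt m i := ⟨i, rfl⟩
  rw [idxP, dif_pos h]
  exact pt_inj m h.choose_spec

/-- sorted index pair of an edge -/
def epair (m : ℕ) : Sym2 Pt → ℕ × ℕ :=
  Sym2.lift ⟨fun p q => (min (idxP m p) (idxP m q), max (idxP m p) (idxP m q)),
    by intro a b; simp [min_comm, max_comm]⟩

lemma epair_mk {m i j : ℕ} (hij : i < j) : epair m s(pt m i, pt m j) = (i, j) := by
  simp [epair, Sym2.lift_mk, idxP_pt, min_eq_left hij.le, max_eq_right hij.le]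

end

end BPT

/-- Tightness for `h ≥ 4`: for all `4 ≤ h ≤ n` there is a point set in general
position with exactly `h` hull vertices on which every biplane graph has at most
`4n − h − 6` edges. -/
theorem maximum_biplane_tight_h_ge_4 :
    ∀ h n : ℕ, 4 ≤ h → h ≤ n →
      ∃ S : Finset Pt, S.card = n ∧ GenPos S ∧ hullCard S = h ∧
        ∀ E : Finset (Sym2 Pt), IsEdgeSet S E → BiplaneEdges E →
          (E.card : ℤ) ≤ 4 * (n : ℤ) - (h : ℤ) - 6 := by
  intro h n h4 hn
  classical
  set m : ℕ := n - h with hm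
  have hmn : m + 4 ≤ n := by omega
  refine ⟨BPT.Sf m n, BPT.Sf_card m n, BPT.genpos m n, ?_, ?_⟩
  · rw [BPT.hullcard m n hmn]; omega
  intro E hE hbi
  obtain ⟨E₁, E₂, hEu, hdisj, hpl1, hpl2⟩ := hbi
  -- representation of edges by sorted index pairs
  have hrep : ∀ e ∈ E, ∃ i j : ℕ, i < j ∧ j < n ∧ e = s(BPT.pt m i, BPT.pt m j) := by
    intro e he
    obtain ⟨hnd, hmem⟩ := hE e he
    obtain ⟨p, q, rfl⟩ : ∃ p q, e = s(p, q) := by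
      induction e using Sym2.inductionOn with
      | hf a b => exact ⟨a, b, rfl⟩
    have hpq : p ≠ q := fun hc => hnd (Sym2.mk_isDiag_iff.mpr hc)
    have hpS : p ∈ BPT.Sf m n := hmem p (Sym2.mem_mk_left p q)
    have hqS : q ∈ BPT.Sf m n := hmem q (Sym2.mem_mk_right p q)
    obtain ⟨i, hi, rfl⟩ := Finset.mem_image.mp hpS
    obtain ⟨j, hj, rfl⟩ := Finset.mem_image.mp hqS
    rw [Finset.mem_range] at hi hj
    have hij : i ≠ j := fun hc => hpq (by rw [hc])
    rcases Nat.lt_or_ge i j with hlt | hge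
    · exact ⟨i, j, hlt, hj, rfl⟩
    · exact ⟨j, i, by omega, hi, Sym2.eq_swap⟩
  -- the "free" edges
  set FrI : Finset (ℕ × ℕ) :=
    ((Finset.range (n-1)).image fun i => (i, i+1)) ∪ {(0, n-1)} ∪
      ((Finset.Icc 2 (m+1)).image fun b => (0, b)) with hFrI
  set Fr : Finset (Sym2 Pt) := FrI.image (fun p => s(BPT.pt m p.1, BPT.pt m p.2)) with hFr
  have hFrcard : Fr.card ≤ n + m := by
    have h1 : FrI.card ≤ (n-1) + 1 + m := by
      calc FrI.card ≤ (((Finset.range (n-1)).image fun i => (i, i+1)) ∪ {(0, n-1)}).card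
            + ((Finset.Icc 2 (m+1)).image fun b => (0, b)).card := Finset.card_union_le _ _
        _ ≤ ((Finset.range (n-1)).image fun i => (i, i+1)).card + ({(0, n-1)} : Finset (ℕ×ℕ)).card
            + ((Finset.Icc 2 (m+1)).image fun b => (0, b)).card := by
              have := Finset.card_union_le ((Finset.range (n-1)).image fun i => (i, i+1))
                ({(0, n-1)} : Finset (ℕ×ℕ))
              omega
        _ ≤ (n-1) + 1 + m := by
              have c1 : ((Finset.range (n-1)).image fun i => (i, i+1)).card ≤ n - 1 := by
                calc _ ≤ (Finset.range (n-1)).card := Finset.card_image_le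
                  _ = n - 1 := Finset.card_range _
              have c2 : ((Finset.Icc 2 (m+1)).image fun b => (0, b)).card ≤ m := by
                calc _ ≤ (Finset.Icc 2 (m+1)).card := Finset.card_image_le
                  _ = m := by rw [Nat.card_Icc]; omega
              simp only [Finset.card_singleton]
              omega
    calc Fr.card ≤ FrI.card := Finset.card_image_le
      _ ≤ (n-1) + 1 + m := h1
      _ ≤ n + m := by omega
  -- membership in Fr from index pairs
  have hFrIdx : ∀ i j : ℕ, (i, j) ∈ FrI → s(BPT.pt m i, BPT.pt m j) ∈ Fr := by
    intro i j hij
    rw [hFr]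
    exact Finset.mem_image_of_mem _ hij
  -- per-page bound on non-free edges
  have hpage : ∀ (Ek : Finset (Sym2 Pt)), Ek ⊆ E → PlaneEdges Ek →
      (Ek \ Fr).card ≤ n - 3 := by
    intro Ek hEk hplk
    have hrepk : ∀ e ∈ Ek \ Fr, ∃ i j : ℕ, i < j ∧ j < n ∧
        e = s(BPT.pt m i, BPT.pt m j) ∧ BPT.epair m e = (i, j) := by
      intro e he'
      obtain ⟨heE, heF⟩ := Finset.mem_sdiff.mp he'
      obtain ⟨i, j, hij, hjn, heq⟩ := hrep e (hEk heE)
      exact ⟨i, j, hij, hjn, heq, by rw [heq]; exact BPT.epair_mk hij⟩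
    set Dk : Finset (ℕ × ℕ) := (Ek \ Fr).image (BPT.epair m) with hDk
    have hcardk : Dk.card = (Ek \ Fr).card := by
      apply Finset.card_image_of_injOn
      intro e he f hf hef
      obtain ⟨i, j, hij, hjn, heq, hep⟩ := hrepk e he
      obtain ⟨i', j', hij', hjn', heq', hep'⟩ := hrepk f hf
      rw [hep, hep'] at hef
      obtain ⟨rfl, rfl⟩ := Prod.mk.injEq i j i' j' ▸ hef
      · rw [heq, heq']
    have hmemD : ∀ p ∈ Dk, p.1 ∈ Finset.range n ∧ p.2 ∈ Finset.range n ∧ p.1 < p.2 ∧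
        (∃ k ∈ Finset.range n, p.1 < k ∧ k < p.2) ∧
        (∃ x ∈ Finset.range n, x < p.1 ∨ p.2 < x) := by
      intro p hp
      obtain ⟨e, he, hep⟩ := Finset.mem_image.mp hp
      obtain ⟨i, j, hij, hjn, heq, hep2⟩ := hrepk e he
      have hpij : p = (i, j) := by rw [← hep, hep2]
      subst hpij
      have heF : e ∉ Fr := (Finset.mem_sdiff.mp he).2
      simp only
      refine ⟨Finset.mem_range.mpr (by omega), Finset.mem_range.mpr hjn, hij, ?_, ?_⟩
      · by_cases hj2 : j = i + 1
        · exfalso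
          apply heF
          rw [heq, hj2]
          apply hFrIdx
          rw [hFrI]
          apply Finset.mem_union_left
          apply Finset.mem_union_left
          exact Finset.mem_image_of_mem _ (Finset.mem_range.mpr (by omega))
        · exact ⟨i + 1, Finset.mem_range.mpr (by omega), by omega, by omega⟩
      · by_cases hi0 : i = 0
        · by_cases hjn1 : j = n - 1
          · exfalso
            apply heF
            rw [heq, hi0, hjn1]
            apply hFrIdx
            rw [hFrI]
            apply Finset.mem_union_left
            apply Finset.mem_union_right
            simp
          · exact ⟨n - 1, Finset.mem_range.mpr (by omega), Or.inr (by omega)⟩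
        · exact ⟨0, Finset.mem_range.mpr (by omega), Or.inl (by omega)⟩
    have hncD : ∀ p ∈ Dk, ∀ q ∈ Dk, ¬(p.1 < q.1 ∧ q.1 < p.2 ∧ p.2 < q.2) := by
      intro p hp q hq hcon
      obtain ⟨e, he, hep⟩ := Finset.mem_image.mp hp
      obtain ⟨f, hf, hfp⟩ := Finset.mem_image.mp hq
      obtain ⟨a, b, hab, hbn, heq, hep2⟩ := hrepk e he
      obtain ⟨c, d, hcd, hdn, hfq, hfp2⟩ := hrepk f hf
      have hpab : p = (a, b) := by rw [← hep, hep2]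
      have hqcd : q = (c, d) := by rw [← hfp, hfp2]
      subst hpab; subst hqcd
      simp only at hcon
      obtain ⟨hac, hcb, hbd⟩ := hcon
      have heE : e ∈ Ek := (Finset.mem_sdiff.mp he).1
      have hfE : f ∈ Ek := (Finset.mem_sdiff.mp hf).1
      have heF : e ∉ Fr := (Finset.mem_sdiff.mp he).2
      have hef : e ≠ f := by
        intro hc
        rw [hc, hfp2] at hep2
        have : c = a := ((Prod.mk.injEq c d a b).mp hep2).1
        omega
      have hplane := hplk e heE f hfE hef
      -- the geometric crossing
      have hnp : ¬(a = 0 ∧ b ≤ m + 1) := by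
        intro ⟨ha0, hbm⟩
        apply heF
        rw [heq, ha0]
        apply hFrIdx
        rw [hFrI]
        apply Finset.mem_union_right
        exact Finset.mem_image_of_mem _ (Finset.mem_Icc.mpr ⟨by omega, hbm⟩)
      have hs1 : 0 < BPT.sg m a c b := BPT.sg_pos_sorted hac hcb (by omega)
      have hs2 : 0 < BPT.sg m a b d := BPT.sg_pos_sorted (by omega) hbd (by omega)
      have hs3 : 0 < BPT.sg m a c d := BPT.sg_pos_sorted hac (by omega) (by omega)
      have hs4 : 0 < BPT.sg m c b d := BPT.sg_pos_para (by omega) hcb hbd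
      have hd1 : BPT.det2 (BPT.pt m b - BPT.pt m a) (BPT.pt m c - BPT.pt m a) < 0 := by
        have := BPT.sg_swap m a b c
        have h0 : BPT.sg m a b c < 0 := by rw [this]; linarith
        exact h0
      have hd2 : 0 < BPT.det2 (BPT.pt m b - BPT.pt m a) (BPT.pt m d - BPT.pt m a) := hs2
      have hd3 : 0 < BPT.det2 (BPT.pt m d - BPT.pt m c) (BPT.pt m a - BPT.pt m c) := by
        have h0 : BPT.sg m c d a = BPT.sg m a c d := by
          rw [BPT.sg_cyc m c d a, BPT.sg_cyc m d a c]
        have : 0 < BPT.sg m c d a := by rw [h0]; exact hs3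
        exact this
      have hd4 : BPT.det2 (BPT.pt m d - BPT.pt m c) (BPT.pt m b - BPT.pt m c) < 0 := by
        have h0 : BPT.sg m c d b = - BPT.sg m c b d := BPT.sg_swap m c d b
        have : BPT.sg m c d b < 0 := by rw [h0]; linarith
        exact this
      have hcross := BPT.cross_nonempty (BPT.pt m a) (BPT.pt m b) (BPT.pt m c) (BPT.pt m d)
        hd1 hd2 hd3 hd4
      have hsege : segOf e = openSegment ℝ (BPT.pt m a) (BPT.pt m b) := by
        rw [heq]; rfl
      have hsegf : segOf f = openSegment ℝ (BPT.pt m c) (BPT.pt m d) := by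
        rw [hfq]; rfl
      rw [hsege, hsegf] at hplane
      exact hcross.ne_empty hplane
    have hbound := BPT.diag_bound n (Finset.range n) Dk
      (le_of_eq (Finset.card_range n)) hmemD hncD
    rw [Finset.card_range] at hbound
    omega
  -- final counting
  have hsub : E ⊆ (E₁ \ Fr) ∪ (E₂ \ Fr) ∪ Fr := by
    intro e he
    rw [hEu] at he
    by_cases hf : e ∈ Fr
    · exact Finset.mem_union_right _ hf
    · apply Finset.mem_union_left
      rcases Finset.mem_union.mp he with h1 | h2
      · exact Finset.mem_union_left _ (Finset.mem_sdiff.mpr ⟨h1, hf⟩)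
      · exact Finset.mem_union_right _ (Finset.mem_sdiff.mpr ⟨h2, hf⟩)
  have hb1 := hpage E₁ (by rw [hEu]; exact Finset.subset_union_left) hpl1
  have hb2 := hpage E₂ (by rw [hEu]; exact Finset.subset_union_right) hpl2
  have hEcard : E.card ≤ (n - 3) + (n - 3) + (n + m) := by
    calc E.card ≤ ((E₁ \ Fr) ∪ (E₂ \ Fr) ∪ Fr).card := Finset.card_le_card hsub
      _ ≤ ((E₁ \ Fr) ∪ (E₂ \ Fr)).card + Fr.card := Finset.card_union_le _ _
      _ ≤ (E₁ \ Fr).card + (E₂ \ Fr).card + Fr.card := by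
          have := Finset.card_union_le (E₁ \ Fr) (E₂ \ Fr)
          omega
      _ ≤ (n - 3) + (n - 3) + (n + m) := by omega
  omega
end

section
/- Let G = (S,E) be a biplane graph on a finite point set S in general position, and suppose E = R ∪ B where T_R = (S,R) and T_B = (S,B) are triangulations (maximal plane graphs) of S. Then an edge e ∈ E belongs to R ∩ B if and only if no other edge of E crosses e. -/
/-- In a biplane graph which is the union of two triangulations `R` and `B`, an
edge lies in `R ∩ B` if and only if no other edge of the graph crosses it. -/
theorem purple_iff_uncrossed
    (S : Finset Pt) (E R B : Finset (Sym2 Pt))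
    (hgp : GenPos S) (hbi : BiplaneEdges E)
    (hR : MaxPlane S R) (hB : MaxPlane S B) (hE : E = R ∪ B) :
    ∀ e ∈ E, (e ∈ R ∩ B ↔ ∀ f ∈ E, f ≠ e → segOf e ∩ segOf f = ∅) := by
  intro e he
  have heE : ¬ e.IsDiag ∧ ∀ p ∈ e, p ∈ S := by
    rw [hE, Finset.mem_union] at he
    cases he with
    | inl h => exact hR.1 e h
    | inr h => exact hB.1 e h
  constructor
  · intro hme f hf hfe
    rw [Finset.mem_inter] at hme
    rw [hE, Finset.mem_union] at hf
    cases hf with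
    | inl hfR => exact hR.2.1 e hme.1 f hfR (Ne.symm hfe)
    | inr hfB => exact hB.2.1 e hme.2 f hfB (Ne.symm hfe)
  · intro huncross
    rw [Finset.mem_inter]
    have key : ∀ T : Finset (Sym2 Pt), T ⊆ E → MaxPlane S T → e ∈ T := by
      intro T hTE hT
      by_contra heT
      have hnp := hT.2.2 e heE.1 heE.2 heT
      rw [PlaneEdges] at hnp
      push_neg at hnp
      obtain ⟨a, ha, b, hb, hab, hcross'⟩ := hnp
      have hcross : segOf a ∩ segOf b ≠ ∅ := Set.nonempty_iff_ne_empty.mp hcross'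
      rw [Finset.mem_insert] at ha hb
      rcases ha with rfl | haT
      · rcases hb with rfl | hbT
        · exact hab rfl
        · exact hcross (huncross b (hTE hbT) (fun h => heT (h ▸ hbT)))
      · rcases hb with rfl | hbT
        · have := huncross a (hTE haT) (fun h => heT (h ▸ haT))
          exact hcross (by rw [Set.inter_comm]; exact this)
        · exact hcross (hT.2.1 a haT b hbT hab)
    exact ⟨key R (hE ▸ Finset.subset_union_left) hR,
           key B (hE ▸ Finset.subset_union_right) hB⟩
end
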